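/- arXiv:2010.12048 — 2 statements merged into one kernel-verified Lean document; each statement's English description precedes it below -/
import Mathlib

section
/- Consider FGGs all of whose node labels have value domain ℕ and each of whose factor functions is either the successor indicator F(x, y) = 1 if y = x + 1 and 0 otherwise, or the zero indicator F(x) = 1 if x = 0 and 0 otherwise. Such an FGG is a finite object and can be encoded as a natural number. There is no computable function that, given (a code for) such an FGG G, decides whether Z_G = 0; i.e., the predicate 'Z_G = 0' on codes of such FGGs is not a computable (decidable) predicate. -/
open scoped ENNReal Classical

structure Fragment (LV LE : Type) (htype : LE → List LV) where
  V : Finset ℕ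
  E : Finset ℕ
  att : ℕ → List ℕ
  labV : ℕ → LV
  labE : ℕ → LE
  ext : List ℕ
  att_mem : ∀ e ∈ E, ∀ v ∈ att e, v ∈ V
  wt : ∀ e ∈ E, (att e).map labV = htype (labE e)
  ext_mem : ∀ v ∈ ext, v ∈ V

structure HRG (LV LE : Type) (htype : LE → List LV) where
  N : Set LE
  T : Set LE
  finN : N.Finite
  finT : T.Finite
  disj : Disjoint N T
  P : Type
  finP : Finite P
  lhs : P → LE
  lhs_mem : ∀ π, lhs π ∈ N
  rhs : P → Fragment LV LE htype
  rhs_lab : ∀ π, ∀ e ∈ (rhs π).E, (rhs π).labE e ∈ N ∪ T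
  rhs_ext : ∀ π, ((rhs π).ext).map (rhs π).labV = htype (lhs π)
  S : LE
  S_mem : S ∈ N
  S_type : htype S = []

variable {LV LE : Type} {htype : LE → List LV}

inductive Deriv (G : HRG LV LE htype) : LE → Type
  | node (π : G.P)
      (children : ∀ e, e ∈ (G.rhs π).E → (G.rhs π).labE e ∈ G.N →
        Deriv G ((G.rhs π).labE e)) :
      Deriv G (G.lhs π)

structure AHyper (LV LE : Type) (htype : LE → List LV) where
  V : Type
  E : Type
  finV : Finite V
  finE : Finite E
  att : E → List V
  labV : V → LV
  labE : E → LE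
  wt : ∀ e, (att e).map labV = htype (labE e)
  ext : List V

/-- Mapping a function over a `pmap` is an ordinary `map` when the result is
proof-irrelevant. -/
theorem List.map_pmap_eq_map {α β γ : Type*} {p : α → Prop} (l : List α)
    (H : ∀ a ∈ l, p a) (f : ∀ a, p a → β) (g : β → γ) (g' : α → γ)
    (hfg : ∀ a ha, g (f a ha) = g' a) : (l.pmap f H).map g = l.map g' := by
  induction l with
  | nil => simp
  | cons a l ih =>
      simp only [List.pmap, List.map_cons, hfg]
      exact congrArg _ (ih (fun x hx => H x (List.mem_cons_of_mem _ hx)))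

namespace Fragment

variable (R : Fragment LV LE htype) (NT : Set LE)
  (child : ∀ e, e ∈ R.E → R.labE e ∈ NT → AHyper LV LE htype)
  (hchild : ∀ e he hn, ((child e he hn).ext).map (child e he hn).labV = htype (R.labE e))

/-- Replacement of the `NT`-labeled edges of `R` by the given hypergraphs,
identifying the `i`-th endpoint of each replaced edge with the `i`-th external
node of the corresponding replacement graph. -/
noncomputable def replace : AHyper LV LE htype :=
  letI C : ∀ _p : {e : ℕ // e ∈ R.E ∧ R.labE e ∈ NT}, AHyper LV LE htype :=
    fun p => child p.1 p.2.1 p.2.2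
  letI V0 : Type := {v : ℕ // v ∈ R.V} ⊕ Σ p : {e : ℕ // e ∈ R.E ∧ R.labE e ∈ NT}, (C p).V
  letI rel : V0 → V0 → Prop := fun a b =>
    ∃ (p : {e : ℕ // e ∈ R.E ∧ R.labE e ∈ NT}) (i : ℕ)
      (hi : i < (R.att p.1).length) (hv : (R.att p.1).get ⟨i, hi⟩ ∈ R.V)
      (hj : i < (C p).ext.length),
      a = Sum.inl ⟨(R.att p.1).get ⟨i, hi⟩, hv⟩ ∧
      b = Sum.inr ⟨p, (C p).ext.get ⟨i, hj⟩⟩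
  { V := Quot rel
    E := {e : ℕ // e ∈ R.E ∧ R.labE e ∉ NT} ⊕
      Σ p : {e : ℕ // e ∈ R.E ∧ R.labE e ∈ NT}, (C p).E
    finV := by
      haveI : ∀ p : {e : ℕ // e ∈ R.E ∧ R.labE e ∈ NT}, Finite (C p).V :=
        fun p => (C p).finV
      haveI : Finite {e : ℕ // e ∈ R.E ∧ R.labE e ∈ NT} :=
        (R.E.finite_toSet.subset (fun e he => he.1)).to_subtype
      haveI : Finite V0 := by infer_instance
      exact Finite.of_surjective (Quot.mk rel) (fun q => Quot.exists_rep q)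
    finE := by
      haveI : ∀ p : {e : ℕ // e ∈ R.E ∧ R.labE e ∈ NT}, Finite (C p).E :=
        fun p => (C p).finE
      haveI : Finite {e : ℕ // e ∈ R.E ∧ R.labE e ∈ NT} :=
        (R.E.finite_toSet.subset (fun e he => he.1)).to_subtype
      haveI : Finite {e : ℕ // e ∈ R.E ∧ R.labE e ∉ NT} :=
        (R.E.finite_toSet.subset (fun e he => he.1)).to_subtype
      infer_instance
    att := fun e => match e with
      | Sum.inl q => (R.att q.1).pmap (fun v h => Quot.mk rel (Sum.inl ⟨v, h⟩))
          (R.att_mem q.1 q.2.1)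
      | Sum.inr q => ((C q.1).att q.2).map (fun v => Quot.mk rel (Sum.inr ⟨q.1, v⟩))
    labV := Quot.lift (Sum.elim (fun v => R.labV v.1) (fun q => (C q.1).labV q.2)) (by
      rintro a b ⟨p, i, hi, hv, hj, rfl, rfl⟩
      simp only [Sum.elim_inl, Sum.elim_inr, List.get_eq_getElem]
      have h1 : ((R.att p.1).map R.labV)[i]? = (htype (R.labE p.1))[i]? := by
        rw [R.wt p.1 p.2.1]
      have h2 : ((C p).ext.map (C p).labV)[i]? = (htype (R.labE p.1))[i]? := by
        rw [hchild p.1 p.2.1 p.2.2]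
      rw [List.getElem?_map, List.getElem?_eq_getElem hi] at h1
      rw [List.getElem?_map, List.getElem?_eq_getElem hj] at h2
      exact Option.some.inj (h1.trans h2.symm))
    labE := fun e => match e with
      | Sum.inl q => R.labE q.1
      | Sum.inr q => (C q.1).labE q.2
    wt := by
      rintro (q | q)
      · dsimp only
        rw [← R.wt q.1 q.2.1]
        exact List.map_pmap_eq_map _ _ _ _ _ (fun a ha => rfl)
      · dsimp only
        simp only [List.map_map]
        exact (C q.1).wt q.2
    ext := R.ext.pmap (fun v h => Quot.mk rel (Sum.inl ⟨v, h⟩)) R.ext_mem }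

theorem replace_ext_map :
    ((R.replace NT child hchild).ext).map (R.replace NT child hchild).labV =
      R.ext.map R.labV := by
  simp only [replace]
  exact List.map_pmap_eq_map _ _ _ _ _ (fun a ha => rfl)

end Fragment

/-- The derived graph of a derivation tree, together with the fact that the
labels of its external nodes agree with the type of the derived nonterminal. -/
noncomputable def HRG.deriveA (G : HRG LV LE htype) :
    ∀ {X : LE}, Deriv G X → {H : AHyper LV LE htype // H.ext.map H.labV = htype X}
  | _, .node π c =>
      ⟨Fragment.replace (G.rhs π) G.N (fun e he hn => (G.deriveA (c e he hn)).1)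
          (fun e he hn => (G.deriveA (c e he hn)).2),
        by rw [Fragment.replace_ext_map]; exact G.rhs_ext π⟩

/-- The derived graph of a derivation tree. -/
noncomputable def HRG.derive (G : HRG LV LE htype) {X : LE} (D : Deriv G X) :
    AHyper LV LE htype :=
  (G.deriveA D).1

/-- A factor graph grammar: an HRG together with domains for the node labels
and factor functions for the (terminal) edge labels. -/
structure FGG (LV LE : Type) (htype : LE → List LV) (W : Type)
    extends HRG LV LE htype where
  Ω : LV → Set W
  F : LE → List W → NNReal

variable {W : Type}

/-- Assignments of a hypergraph: maps from nodes to values in the domains. -/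
def AHyper.Assign (Ω : LV → Set W) (H : AHyper LV LE htype) : Type :=
  {ξ : H.V → W // ∀ v, ξ v ∈ Ω (H.labV v)}

/-- The weight of an assignment: the product, over all terminal-labeled
hyperedges, of the factor function applied to the values at the endpoints. -/
noncomputable def AHyper.weight (Tset : Set LE) (F : LE → List W → NNReal)
    (H : AHyper LV LE htype) (ξ : H.V → W) : ℝ≥0∞ :=
  ∏ᶠ e : {e : H.E // H.labE e ∈ Tset},
    (F (H.labE e.1) ((H.att e.1).map ξ) : ℝ≥0∞)

/-- The sum–product of a factor graph grammar. -/
noncomputable def FGG.Z (G : FGG LV LE htype W) : ℝ≥0∞ :=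
  ∑' D : Deriv G.toHRG G.S,
    ∑' ξ : (G.toHRG.derive D).Assign G.Ω,
      (G.toHRG.derive D).weight G.T G.F ξ.1

/-- Assignments of the nodes of a fragment. -/
def Fragment.Assign (Ω : LV → Set W) (R : Fragment LV LE htype) : Type :=
  {ξ : {v : ℕ // v ∈ R.V} → W // ∀ v, ξ v ∈ Ω (R.labV v.1)}

/-- The values of an assignment at the external nodes of a fragment. -/
def Fragment.extVals (R : Fragment LV LE htype) (ξ : {v : ℕ // v ∈ R.V} → W) :
    List W :=
  R.ext.pmap (fun v h => ξ ⟨v, h⟩) R.ext_mem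

/-- The values of an assignment at the endpoints of an edge of a fragment. -/
def Fragment.attVals (R : Fragment LV LE htype) (ξ : {v : ℕ // v ∈ R.V} → W)
    (e : ℕ) (he : e ∈ R.E) : List W :=
  (R.att e).pmap (fun v h => ξ ⟨v, h⟩) (R.att_mem e he)

/-- The monotone operator, on `[0,∞]`-valued families `ψ_X(ξ)` indexed by
edge labels `X` and assignments `ξ` to the endpoints of `X`, whose defining
equations are
`ψ_X(ξ) = Σ_{(X→R) ∈ P} Σ_{ξ' : assignment of R with ξ'(ext_R) = ξ}
  (Π_{terminal e ∈ R} F(lab(e))(ξ'(att e))) · (Π_{nonterminal e ∈ R} ψ_{lab(e)}(ξ'(att e)))`. -/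
noncomputable def FGG.sysOp (G : FGG LV LE htype W) :
    (LE → List W → ℝ≥0∞) → (LE → List W → ℝ≥0∞) := fun ψ X ξ =>
  ∑' π : {π : G.P // G.lhs π = X},
    ∑' ξ' : {ξ' : (G.rhs π.1).Assign G.Ω // (G.rhs π.1).extVals ξ'.1 = ξ},
      (∏ᶠ e : {e : ℕ // e ∈ (G.rhs π.1).E ∧ (G.rhs π.1).labE e ∈ G.T},
          (G.F ((G.rhs π.1).labE e.1)
            ((G.rhs π.1).attVals ξ'.1.1 e.1 e.2.1) : ℝ≥0∞)) *
      (∏ᶠ e : {e : ℕ // e ∈ (G.rhs π.1).E ∧ (G.rhs π.1).labE e ∈ G.N},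
          ψ ((G.rhs π.1).labE e.1) ((G.rhs π.1).attVals ξ'.1.1 e.1 e.2.1))

/-! ### Codes for FGGs with ℕ-valued variables and successor/zero factors -/

/-- The factor function, on natural-number values, that is the indicator of
the successor relation. -/
noncomputable def succFactor : List ℕ → NNReal := fun l =>
  match l with
  | [x, y] => if y = x + 1 then 1 else 0
  | _ => 0

/-- The factor function, on natural-number values, that is the indicator of
equality with zero. -/
noncomputable def zeroFactor : List ℕ → NNReal := fun l =>
  match l with
  | [x] => if x = 0 then 1 else 0
  | _ => 0

/-- Edge labels for coded FGGs: a label is a pair (index, arity). Index `0`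
with arity 1 is the zero-indicator terminal, index `1` with arity 2 is the
successor-indicator terminal, and indices `≥ 2` are nonterminals. -/
abbrev CodeLab : Type := ℕ × ℕ

/-- All node labels denote the domain `ℕ`, so a single node label suffices;
the type of an edge label is given by its arity. -/
def htypeC : CodeLab → List Unit := fun p => List.replicate p.2 ()

def zeroLab : CodeLab := (0, 1)

def succLab : CodeLab := (1, 2)

/-- A code for a rule: left-hand side label, number of right-hand side nodes,
list of edges (label and endpoints), and external nodes. -/
abbrev RuleCode : Type := CodeLab × ℕ × List (CodeLab × List ℕ) × List ℕ

/-- A code for an FGG: list of nonterminal labels, list of rules, and start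
symbol. -/
abbrev FGGCode : Type := List CodeLab × List RuleCode × CodeLab

/-- Well-formedness of a rule code. -/
def WFRule (nts : List CodeLab) (r : RuleCode) : Prop :=
  r.1 ∈ nts ∧
  (∀ ed ∈ r.2.2.1,
    (ed.1 ∈ nts ∨ ed.1 = zeroLab ∨ ed.1 = succLab) ∧
    ed.2.length = ed.1.2 ∧ (∀ v ∈ ed.2, v < r.2.1)) ∧
  r.2.2.2.length = r.1.2 ∧ (∀ v ∈ r.2.2.2, v < r.2.1)

/-- Well-formedness of an FGG code. -/
def WF (c : FGGCode) : Prop :=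
  (∀ a ∈ c.1, 2 ≤ a.1) ∧ c.2.2 ∈ c.1 ∧ c.2.2.2 = 0 ∧
  ∀ r ∈ c.2.1, WFRule c.1 r

theorem map_unit_eq_replicate {α : Type} (l : List α) :
    l.map (fun _ => ()) = List.replicate l.length () := by
  induction l with
  | nil => rfl
  | cons a l ih => simp [ih, List.replicate_succ]

/-- The right-hand side fragment denoted by a rule code. -/
noncomputable def ruleFrag (nts : List CodeLab) (r : RuleCode)
    (h : WFRule nts r) : Fragment Unit CodeLab htypeC where
  V := Finset.range r.2.1
  E := Finset.range r.2.2.1.length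
  att e := if he : e < r.2.2.1.length then (r.2.2.1.get ⟨e, he⟩).2 else []
  labV _ := ()
  labE e := if he : e < r.2.2.1.length then (r.2.2.1.get ⟨e, he⟩).1 else zeroLab
  ext := r.2.2.2
  att_mem := by
    intro e he v hv
    rw [Finset.mem_range] at he
    simp only [dif_pos he] at hv
    rw [Finset.mem_range]
    exact ((h.2.1 _ (List.get_mem _ _)).2.2) v hv
  wt := by
    intro e he
    rw [Finset.mem_range] at he
    simp only [dif_pos he, map_unit_eq_replicate]
    rw [(h.2.1 _ (List.get_mem _ _)).2.1]
    rfl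
  ext_mem := by
    intro v hv
    rw [Finset.mem_range]
    exact h.2.2.2 v hv

/-- The FGG denoted by a well-formed FGG code: variable domains are `ℕ` and
the factor functions are the zero indicator and the successor indicator. -/
noncomputable def interp (c : FGGCode) (h : WF c) :
    FGG Unit CodeLab htypeC ℕ where
  N := {x | x ∈ c.1}
  T := {zeroLab, succLab}
  finN := c.1.finite_toSet
  finT := (Set.finite_singleton _).insert _
  disj := by
    rw [Set.disjoint_left]
    rintro x hx (rfl | rfl)
    · have := h.1 _ hx
      simp [zeroLab] at this
    · have := h.1 _ hx
      simp [succLab] at this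
  P := Fin c.2.1.length
  finP := inferInstance
  lhs i := (c.2.1.get i).1
  lhs_mem i := (h.2.2.2 _ (List.get_mem _ _)).1
  rhs i := ruleFrag c.1 (c.2.1.get i) (h.2.2.2 _ (List.get_mem _ _))
  rhs_lab := by
    intro i e he
    have he' : e < (c.2.1.get i).2.2.1.length := by
      have h2 : e ∈ Finset.range (c.2.1.get i).2.2.1.length := he
      exact Finset.mem_range.mp h2
    show (if h' : e < (c.2.1.get i).2.2.1.length then
        ((c.2.1.get i).2.2.1.get ⟨e, h'⟩).1 else zeroLab) ∈ _ ∪ _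
    rw [dif_pos he']
    have hwf := h.2.2.2 _ (List.get_mem c.2.1 i)
    rcases (hwf.2.1 _ (List.get_mem _ _)).1 with hh | hh | hh
    · exact Or.inl hh
    · exact Or.inr (by rw [hh]; left; rfl)
    · exact Or.inr (by rw [hh]; right; rfl)
  rhs_ext := by
    intro i
    have hwf := h.2.2.2 _ (List.get_mem c.2.1 i)
    show ((c.2.1.get i).2.2.2).map (fun _ => ()) = htypeC (c.2.1.get i).1
    rw [map_unit_eq_replicate, hwf.2.2.1]
    rfl
  S := c.2.2
  S_mem := h.2.1
  S_type := by
    show List.replicate c.2.2.2 () = []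
    rw [h.2.2.1]
    rfl
  Ω := fun _ => Set.univ
  F := fun p l =>
    if p = zeroLab then zeroFactor l
    else if p = succLab then succFactor l else 0


open scoped ENNReal Classical

variable {LV LE W : Type} {htype : LE → List LV}

/-- All terminal constraints are satisfied by an assignment. -/
def SatA (Tset : Set LE) (F : LE → List W → NNReal) (H : AHyper LV LE htype)
    (ξ : H.V → W) : Prop :=
  ∀ e : H.E, H.labE e ∈ Tset → F (H.labE e) ((H.att e).map ξ) ≠ 0

theorem weight_ne_zero_iff (Tset : Set LE) (F : LE → List W → NNReal)
    (H : AHyper LV LE htype) (ξ : H.V → W) :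
    H.weight Tset F ξ ≠ 0 ↔ SatA Tset F H ξ := by
  haveI := H.finE
  haveI : Fintype {e : H.E // H.labE e ∈ Tset} := Fintype.ofFinite _
  rw [AHyper.weight, finprod_eq_prod_of_fintype, Ne, Finset.prod_eq_zero_iff]
  constructor
  · intro h e he h0
    exact h ⟨⟨e, he⟩, Finset.mem_univ _, by exact_mod_cast h0⟩
  · rintro h ⟨⟨e, he⟩, -, h0⟩
    exact h e he (by exact_mod_cast h0)

namespace Fragment

variable (R : Fragment LV LE htype) (NT : Set LE)
  (child : ∀ e, e ∈ R.E → R.labE e ∈ NT → AHyper LV LE htype)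
  (hchild : ∀ e he hn, ((child e he hn).ext).map (child e he hn).labV = htype (R.labE e))

/-- Inclusion of the nodes of `R` into the replacement. -/
def inlV (v : {v : ℕ // v ∈ R.V}) : (R.replace NT child hchild).V :=
  Quot.mk _ (Sum.inl v)

/-- Inclusion of the nodes of a replacement graph into the replacement. -/
def inrV (p : {e : ℕ // e ∈ R.E ∧ R.labE e ∈ NT})
    (w : (child p.1 p.2.1 p.2.2).V) : (R.replace NT child hchild).V :=
  Quot.mk _ (Sum.inr ⟨p, w⟩)

theorem labV_inlV (v) : (R.replace NT child hchild).labV (inlV R NT child hchild v)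
    = R.labV v.1 := rfl

theorem labV_inrV (p w) : (R.replace NT child hchild).labV (inrV R NT child hchild p w)
    = (child p.1 p.2.1 p.2.2).labV w := rfl

theorem V_cases (x : (R.replace NT child hchild).V) :
    (∃ v, x = inlV R NT child hchild v) ∨ ∃ p w, x = inrV R NT child hchild p w := by
  induction x using Quot.ind with
  | _ a =>
    rcases a with v | ⟨p, w⟩
    · exact Or.inl ⟨v, rfl⟩
    · exact Or.inr ⟨p, w, rfl⟩

include hchild in
theorem att_len (p : {e : ℕ // e ∈ R.E ∧ R.labE e ∈ NT}) :
    (R.att p.1).length = ((child p.1 p.2.1 p.2.2).ext).length := by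
  have h1 := congrArg List.length (R.wt p.1 p.2.1)
  have h2 := congrArg List.length (hchild p.1 p.2.1 p.2.2)
  simp only [List.length_map] at h1 h2
  omega

theorem glueV (p : {e : ℕ // e ∈ R.E ∧ R.labE e ∈ NT}) (i : ℕ)
    (hi : i < (R.att p.1).length) (hj : i < ((child p.1 p.2.1 p.2.2).ext).length)
    (hv : (R.att p.1).get ⟨i, hi⟩ ∈ R.V) :
    inlV R NT child hchild ⟨(R.att p.1).get ⟨i, hi⟩, hv⟩ =
      inrV R NT child hchild p (((child p.1 p.2.1 p.2.2).ext).get ⟨i, hj⟩) :=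
  Quot.sound ⟨p, i, hi, hv, hj, rfl, rfl⟩

variable (ξ : (R.replace NT child hchild).V → W)

theorem ext_map : ((R.replace NT child hchild).ext).map ξ =
    R.extVals (fun v => ξ (inlV R NT child hchild v)) := by
  show ((R.ext.pmap _ R.ext_mem).map ξ) = R.ext.pmap _ R.ext_mem
  erw [List.map_pmap]
  rfl

theorem att_inl (q : {e : ℕ // e ∈ R.E ∧ R.labE e ∉ NT}) :
    ((R.replace NT child hchild).att (Sum.inl q)).map ξ =
      R.attVals (fun v => ξ (inlV R NT child hchild v)) q.1 q.2.1 := by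
  show (((R.att q.1).pmap _ _).map ξ) = (R.att q.1).pmap _ _
  erw [List.map_pmap]
  rfl

theorem att_inr (p : {e : ℕ // e ∈ R.E ∧ R.labE e ∈ NT})
    (e : (child p.1 p.2.1 p.2.2).E) :
    ((R.replace NT child hchild).att
        (Sum.inr (⟨p, e⟩ : Σ p : {e : ℕ // e ∈ R.E ∧ R.labE e ∈ NT},
          (child p.1 p.2.1 p.2.2).E))).map ξ =
      ((child p.1 p.2.1 p.2.2).att e).map (fun w => ξ (inrV R NT child hchild p w)) := by
  show ((((child p.1 p.2.1 p.2.2).att e).map _).map ξ) = _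
  erw [List.map_map]
  rfl

theorem glue_map (p : {e : ℕ // e ∈ R.E ∧ R.labE e ∈ NT}) :
    ((child p.1 p.2.1 p.2.2).ext).map (fun w => ξ (inrV R NT child hchild p w)) =
      R.attVals (fun v => ξ (inlV R NT child hchild v)) p.1 p.2.1 := by
  unfold Fragment.attVals
  apply List.ext_get
  · rw [List.length_map, List.length_pmap, att_len R NT child hchild p]
  · intro i h1 h2
    have hj : i < ((child p.1 p.2.1 p.2.2).ext).length := by
      rw [List.length_map] at h1; exact h1
    have h2' : i < (R.att p.1).length := by
      rw [List.length_pmap] at h2; exact h2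
    rw [List.get_eq_getElem, List.getElem_map]
    have : ((R.att p.1).pmap (fun v h => (fun v => ξ (inlV R NT child hchild v)) ⟨v, h⟩)
        (R.att_mem p.1 p.2.1)).get ⟨i, h2⟩ =
        ξ (inlV R NT child hchild ⟨(R.att p.1).get ⟨i, h2'⟩, R.att_mem p.1 p.2.1 _
          (List.get_mem _ _)⟩) := by
      simp [List.getElem_pmap]
    rw [this, glueV R NT child hchild p i h2' hj]
    rfl

end Fragment

theorem Fragment.attVals_length (R : Fragment LV LE htype) (ξ : {v : ℕ // v ∈ R.V} → W)
    (e : ℕ) (he : e ∈ R.E) : (R.attVals ξ e he).length = (R.att e).length :=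
  List.length_pmap

theorem Fragment.attVals_get (R : Fragment LV LE htype) (ξ : {v : ℕ // v ∈ R.V} → W)
    (e : ℕ) (he : e ∈ R.E) (i : ℕ) (h : i < (R.attVals ξ e he).length)
    (h' : i < (R.att e).length) :
    (R.attVals ξ e he).get ⟨i, h⟩ =
      ξ ⟨(R.att e).get ⟨i, h'⟩, R.att_mem e he _ (List.get_mem _ _)⟩ := by
  unfold Fragment.attVals
  simp [List.getElem_pmap]

/-- Inductive satisfiability of a nonterminal with given external values. -/
inductive GSat (G : FGG LV LE htype W) : LE → List W → Prop
  | mk (π : G.P) (ξ : {v : ℕ // v ∈ (G.rhs π).V} → W)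
      (hΩ : ∀ v, ξ v ∈ G.Ω ((G.rhs π).labV v.1))
      (hT : ∀ e, ∀ he : e ∈ (G.rhs π).E, (G.rhs π).labE e ∈ G.T →
        G.F ((G.rhs π).labE e) ((G.rhs π).attVals ξ e he) ≠ 0)
      (hN : ∀ e, ∀ he : e ∈ (G.rhs π).E, (G.rhs π).labE e ∈ G.N →
        GSat G ((G.rhs π).labE e) ((G.rhs π).attVals ξ e he)) :
      GSat G (G.lhs π) ((G.rhs π).extVals ξ)

section Replace

variable (G : FGG LV LE htype W) (π : G.P)
  (child : ∀ e, e ∈ (G.rhs π).E → (G.rhs π).labE e ∈ G.N → AHyper LV LE htype)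
  (hchild : ∀ e he hn, ((child e he hn).ext).map (child e he hn).labV
    = htype ((G.rhs π).labE e))

theorem GSat.of_replace (ξ : ((G.rhs π).replace G.N child hchild).V → W)
    (hΩ : ∀ v, ξ v ∈ G.Ω (((G.rhs π).replace G.N child hchild).labV v))
    (hS : SatA G.T G.F ((G.rhs π).replace G.N child hchild) ξ)
    (ih : ∀ e he hn (ξ' : (child e he hn).V → W),
      (∀ v, ξ' v ∈ G.Ω ((child e he hn).labV v)) →
      SatA G.T G.F (child e he hn) ξ' →
      GSat G ((G.rhs π).labE e) (((child e he hn).ext).map ξ')) :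
    GSat G (G.lhs π) ((((G.rhs π).replace G.N child hchild).ext).map ξ) := by
  rw [Fragment.ext_map]
  exact GSat.mk π (fun v => ξ (Fragment.inlV (G.rhs π) G.N child hchild v))
    (fun v => hΩ (Fragment.inlV (G.rhs π) G.N child hchild v))
    (fun e he hTl => by
      have hnot : (G.rhs π).labE e ∉ G.N := fun hn => (G.disj.ne_of_mem hn hTl) rfl
      have h' := hS (Sum.inl ⟨e, he, hnot⟩) hTl
      rwa [Fragment.att_inl] at h')
    (fun e he hn => by
      have h1 := ih e he hn
        (fun w => ξ (Fragment.inrV (G.rhs π) G.N child hchild ⟨e, ⟨he, hn⟩⟩ w))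
        (fun w => hΩ (Fragment.inrV (G.rhs π) G.N child hchild ⟨e, ⟨he, hn⟩⟩ w))
        (fun e' hT' => by
          have h' := hS (Sum.inr ⟨⟨e, ⟨he, hn⟩⟩, e'⟩) hT'
          rwa [Fragment.att_inr] at h')
      have h9 : (List.map
          (fun w => ξ (Fragment.inrV (G.rhs π) G.N child hchild ⟨e, ⟨he, hn⟩⟩ w))
          ((child e he hn).ext))
          = (G.rhs π).attVals
            (fun v => ξ (Fragment.inlV (G.rhs π) G.N child hchild v)) e he :=
        Fragment.glue_map (G.rhs π) G.N child hchild ξ ⟨e, ⟨he, hn⟩⟩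
      rwa [h9] at h1)

theorem exists_replace_assign (ξR : {v : ℕ // v ∈ (G.rhs π).V} → W)
    (hΩ : ∀ v, ξR v ∈ G.Ω ((G.rhs π).labV v.1))
    (hT : ∀ e, ∀ he : e ∈ (G.rhs π).E, (G.rhs π).labE e ∈ G.T →
      G.F ((G.rhs π).labE e) ((G.rhs π).attVals ξR e he) ≠ 0)
    (hc : ∀ e he hn, ∃ ξ' : (child e he hn).V → W,
      (∀ v, ξ' v ∈ G.Ω ((child e he hn).labV v)) ∧
      SatA G.T G.F (child e he hn) ξ' ∧
      ((child e he hn).ext).map ξ' = (G.rhs π).attVals ξR e he) :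
    ∃ ξ : ((G.rhs π).replace G.N child hchild).V → W,
      (∀ v, ξ v ∈ G.Ω (((G.rhs π).replace G.N child hchild).labV v)) ∧
      SatA G.T G.F ((G.rhs π).replace G.N child hchild) ξ ∧
      ((((G.rhs π).replace G.N child hchild).ext).map ξ) = (G.rhs π).extVals ξR := by
  choose ξs h1 h2 h3 using hc
  refine ⟨Quot.lift (Sum.elim ξR (fun q => ξs q.1.1 q.1.2.1 q.1.2.2 q.2)) ?_, ?_, ?_, ?_⟩
  · rintro a b ⟨p, i, hi, hv, hj, rfl, rfl⟩
    show ξR ⟨((G.rhs π).att p.1).get ⟨i, hi⟩, hv⟩ =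
      ξs p.1 p.2.1 p.2.2 (((child p.1 p.2.1 p.2.2).ext).get ⟨i, hj⟩)
    have hglue := h3 p.1 p.2.1 p.2.2
    have hlen : i < ((G.rhs π).attVals ξR p.1 p.2.1).length := by
      rw [Fragment.attVals_length]; exact hi
    have h4 : (List.map (ξs p.1 p.2.1 p.2.2)
        ((child p.1 p.2.1 p.2.2).ext))[i]'(by rw [hglue]; exact hlen) =
        ((G.rhs π).attVals ξR p.1 p.2.1)[i]'hlen := by
      simp only [hglue]
    rw [List.getElem_map] at h4
    have h6 : ((G.rhs π).attVals ξR p.1 p.2.1).get ⟨i, hlen⟩ =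
        ξR ⟨((G.rhs π).att p.1).get ⟨i, hi⟩, (G.rhs π).att_mem p.1 p.2.1 _
          (List.get_mem _ _)⟩ := Fragment.attVals_get _ _ _ _ i hlen hi
    exact h6.symm.trans h4.symm
  · intro v
    induction v using Quot.ind with
    | _ a =>
      rcases a with v | ⟨p, w⟩
      · exact hΩ v
      · exact h1 p.1 p.2.1 p.2.2 w
  · rintro (q | ⟨p, e⟩) hTl
    · have h' := hT q.1 q.2.1 hTl
      erw [Fragment.att_inl]
      exact h'
    · have h' := h2 p.1 p.2.1 p.2.2 e hTl
      erw [Fragment.att_inr]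
      exact h'
  · erw [Fragment.ext_map]
    rfl

end Replace

theorem gsat_of (G : FGG LV LE htype W) {X : LE} (D : Deriv G.toHRG X)
    (ξ : (G.toHRG.derive D).V → W)
    (hΩ : ∀ v, ξ v ∈ G.Ω ((G.toHRG.derive D).labV v))
    (hS : SatA G.T G.F (G.toHRG.derive D) ξ) :
    GSat G X (((G.toHRG.derive D).ext).map ξ) := by
  induction D with
  | node π c ih =>
    exact GSat.of_replace G π (fun e he hn => G.toHRG.derive (c e he hn))
      (fun e he hn => (G.toHRG.deriveA (c e he hn)).2) ξ hΩ hS ih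

theorem exists_of_gsat (G : FGG LV LE htype W) {X : LE} {w : List W}
    (h : GSat G X w) :
    ∃ (D : Deriv G.toHRG X) (ξ : (G.toHRG.derive D).V → W),
      (∀ v, ξ v ∈ G.Ω ((G.toHRG.derive D).labV v)) ∧
      SatA G.T G.F (G.toHRG.derive D) ξ ∧
      ((G.toHRG.derive D).ext).map ξ = w := by
  induction h with
  | mk π ξR hΩ hT hN ih =>
    choose Ds hDs using ih
    obtain ⟨ξ, hΩ', hS', hext⟩ := exists_replace_assign G π
      (fun e he hn => G.toHRG.derive (Ds e he hn))
      (fun e he hn => (G.toHRG.deriveA (Ds e he hn)).2) ξR hΩ hT hDs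
    exact ⟨Deriv.node π Ds, ξ, hΩ', hS', hext⟩

theorem ext_nil (G : FGG LV LE htype W) (D : Deriv G.toHRG G.S) :
    (G.toHRG.derive D).ext = [] := by
  have h := ((G.toHRG.deriveA D).2).trans G.S_type
  exact List.map_eq_nil_iff.mp h

theorem Z_eq_zero_iff (G : FGG LV LE htype W) : G.Z = 0 ↔ ¬ GSat G G.S [] := by
  rw [FGG.Z, ENNReal.tsum_eq_zero]
  constructor
  · intro hz hgs
    obtain ⟨D, ξ, hΩ, hS, -⟩ := exists_of_gsat G hgs
    have h1 := hz D
    rw [ENNReal.tsum_eq_zero] at h1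
    exact (weight_ne_zero_iff G.T G.F _ ξ).mpr hS (h1 ⟨ξ, hΩ⟩)
  · intro hgs D
    rw [ENNReal.tsum_eq_zero]
    intro ξ
    by_contra hne
    have hS := (weight_ne_zero_iff G.T G.F _ ξ.1).mp hne
    have h2 := gsat_of G D ξ.1 ξ.2 hS
    rw [ext_nil, List.map_nil] at h2
    exact hgs h2

open scoped ENNReal Classical

theorem List.pmap_eq_map' {α β : Type*} {p : α → Prop} (l : List α)
    (H : ∀ a ∈ l, p a) (f : ∀ a, p a → β) (g : α → β)
    (hfg : ∀ a ha, f a ha = g a) : l.pmap f H = l.map g := by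
  induction l with
  | nil => rfl
  | cons a l ih =>
      simp only [List.pmap, List.map_cons, hfg]
      exact congrArg _ (ih (fun x hx => H x (List.mem_cons_of_mem _ hx)))

/-- Code-level satisfiability: the logic-program semantics of an FGG code. -/
inductive CSat (c : FGGCode) : CodeLab → List ℕ → Prop
  | mk (r : RuleCode) (hr : r ∈ c.2.1) (ν : ℕ → ℕ)
      (hz : ∀ ed ∈ r.2.2.1, ed.1 = zeroLab → zeroFactor (ed.2.map ν) ≠ 0)
      (hs : ∀ ed ∈ r.2.2.1, ed.1 = succLab → succFactor (ed.2.map ν) ≠ 0)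
      (hn : ∀ ed ∈ r.2.2.1, ed.1 ∈ c.1 → CSat c ed.1 (ed.2.map ν)) :
      CSat c r.1 (r.2.2.2.map ν)

namespace InterpFacts

variable (c : FGGCode) (h : WF c)

theorem rhs_eq (i : Fin c.2.1.length) :
    (interp c h).rhs i = ruleFrag c.1 (c.2.1.get i) (h.2.2.2 _ (List.get_mem _ _)) := rfl

theorem E_eq (i : Fin c.2.1.length) :
    ((interp c h).rhs i).E = Finset.range (c.2.1.get i).2.2.1.length := rfl

theorem labE_eq (i : Fin c.2.1.length) (e : ℕ) (he : e < (c.2.1.get i).2.2.1.length) :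
    ((interp c h).rhs i).labE e = ((c.2.1.get i).2.2.1.get ⟨e, he⟩).1 := by
  show (if h' : e < (c.2.1.get i).2.2.1.length then _ else _) = _
  rw [dif_pos he]

theorem att_eq (i : Fin c.2.1.length) (e : ℕ) (he : e < (c.2.1.get i).2.2.1.length) :
    ((interp c h).rhs i).att e = ((c.2.1.get i).2.2.1.get ⟨e, he⟩).2 := by
  show (if h' : e < (c.2.1.get i).2.2.1.length then _ else _) = _
  rw [dif_pos he]

theorem attVals_eq (i : Fin c.2.1.length)
    (ξ : {v : ℕ // v ∈ ((interp c h).rhs i).V} → ℕ) (ν : ℕ → ℕ)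
    (hν : ∀ v (hv : v ∈ ((interp c h).rhs i).V), ξ ⟨v, hv⟩ = ν v)
    (e : ℕ) (he : e ∈ ((interp c h).rhs i).E) (he' : e < (c.2.1.get i).2.2.1.length) :
    ((interp c h).rhs i).attVals ξ e he = ((c.2.1.get i).2.2.1.get ⟨e, he'⟩).2.map ν := by
  unfold Fragment.attVals
  rw [List.pmap_eq_map' _ _ _ ν (fun a ha => hν a ha)]
  rw [att_eq c h i e he']

theorem extVals_eq (i : Fin c.2.1.length)
    (ξ : {v : ℕ // v ∈ ((interp c h).rhs i).V} → ℕ) (ν : ℕ → ℕ)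
    (hν : ∀ v (hv : v ∈ ((interp c h).rhs i).V), ξ ⟨v, hv⟩ = ν v) :
    ((interp c h).rhs i).extVals ξ = (c.2.1.get i).2.2.2.map ν := by
  unfold Fragment.extVals
  exact List.pmap_eq_map' _ _ _ ν (fun a ha => hν a ha)

theorem zs_ne : zeroLab ≠ succLab := by decide

theorem interp_F_zero (l : List ℕ) : (interp c h).F zeroLab l = zeroFactor l := by
  show (if zeroLab = zeroLab then zeroFactor l
    else if zeroLab = succLab then succFactor l else 0) = zeroFactor l
  rw [if_pos rfl]

theorem interp_F_succ (l : List ℕ) : (interp c h).F succLab l = succFactor l := by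
  show (if succLab = zeroLab then zeroFactor l
    else if succLab = succLab then succFactor l else 0) = succFactor l
  rw [if_neg (Ne.symm zs_ne), if_pos rfl]

theorem not_mem_nts_zero : WF c → zeroLab ∉ c.1 := fun h' hm => by
  have := h'.1 _ hm; simp [zeroLab] at this

theorem not_mem_nts_succ : WF c → succLab ∉ c.1 := fun h' hm => by
  have := h'.1 _ hm; simp [succLab] at this

theorem gsat_to_csat {X : CodeLab} {w : List ℕ}
    (hg : GSat (interp c h) X w) : CSat c X w := by
  induction hg with
  | mk π ξ hΩ hT hN ihN =>
    set ν : ℕ → ℕ := fun n =>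
      if hn : n ∈ ((interp c h).rhs π).V then ξ ⟨n, hn⟩ else 0 with hν
    have hν' : ∀ v (hv : v ∈ ((interp c h).rhs π).V), ξ ⟨v, hv⟩ = ν v := by
      intro v hv
      simp only [hν]
      rw [dif_pos hv]
    have hext := extVals_eq c h π ξ ν hν'
    have key : ∀ ed ∈ (c.2.1.get π).2.2.1,
        ∃ (e : ℕ) (he : e ∈ ((interp c h).rhs π).E),
        ((interp c h).rhs π).labE e = ed.1 ∧
        ((interp c h).rhs π).attVals ξ e he = ed.2.map ν := by
      intro ed hed
      obtain ⟨⟨e, he'⟩, hee⟩ := List.mem_iff_get.mp hed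
      refine ⟨e, Finset.mem_range.mpr he', ?_, ?_⟩
      · rw [labE_eq c h π e he', hee]
      · erw [attVals_eq c h π ξ ν hν' e _ he', hee]
    rw [hext]
    refine CSat.mk (c.2.1.get π) (List.get_mem _ _) ν ?_ ?_ ?_
    · intro ed hed hlab
      obtain ⟨e, he, hl, ha⟩ := key ed hed
      have := hT e he (by rw [hl, hlab]; left; rfl)
      rw [ha, hl, hlab, interp_F_zero c h] at this
      exact this
    · intro ed hed hlab
      obtain ⟨e, he, hl, ha⟩ := key ed hed
      have := hT e he (by rw [hl, hlab]; right; rfl)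
      rw [ha, hl, hlab, interp_F_succ c h] at this
      exact this
    · intro ed hed hlab
      obtain ⟨e, he, hl, ha⟩ := key ed hed
      have := ihN e he (by rw [hl]; exact hlab)
      rwa [ha, hl] at this

theorem csat_to_gsat {X : CodeLab} {w : List ℕ}
    (hg : CSat c X w) : GSat (interp c h) X w := by
  induction hg with
  | mk r hr ν hz hs hn ihn =>
    obtain ⟨i, hi⟩ := List.mem_iff_get.mp hr
    subst hi
    set ξ : {v : ℕ // v ∈ ((interp c h).rhs i).V} → ℕ := fun v => ν v.1 with hξ
    have hν' : ∀ v (hv : v ∈ ((interp c h).rhs i).V), ξ ⟨v, hv⟩ = ν v :=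
      fun v hv => rfl
    have hmk := GSat.mk (G := interp c h) i ξ
      (fun v => Set.mem_univ _)
      (fun e he hTl => by
        have he' : e < (c.2.1.get i).2.2.1.length := Finset.mem_range.mp he
        rw [attVals_eq c h i ξ ν hν' e he he']
        rw [labE_eq c h i e he'] at hTl ⊢
        set ed := (c.2.1.get i).2.2.1.get ⟨e, he'⟩ with heddef
        have hedmem : ed ∈ (c.2.1.get i).2.2.1 := List.get_mem _ _
        rcases hTl with h1 | h1
        · have h2 := hz ed hedmem h1
          rw [h1, interp_F_zero c h]
          exact h2
        · have h1 : ed.1 = succLab := h1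
          have h2 := hs ed hedmem h1
          rw [h1, interp_F_succ c h]
          exact h2)
      (fun e he hNl => by
        have he' : e < (c.2.1.get i).2.2.1.length := Finset.mem_range.mp he
        rw [attVals_eq c h i ξ ν hν' e he he']
        rw [labE_eq c h i e he'] at hNl ⊢
        exact ihn _ (List.get_mem _ _) hNl)
    rw [extVals_eq c h i ξ ν hν'] at hmk
    exact hmk

theorem interp_Z_eq_zero_iff : (interp c h).Z = 0 ↔ ¬ CSat c c.2.2 [] := by
  rw [Z_eq_zero_iff]
  constructor
  · exact fun hg hc => hg (csat_to_gsat c h hc)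
  · exact fun hc hg => hc (gsat_to_csat c h hg)

end InterpFacts

open scoped ENNReal Classical
open Nat.Partrec (Code)

def startLab : CodeLab := (2, 0)
def addLab : CodeLab := (3, 3)
def mulLab : CodeLab := (4, 3)
def leLab : CodeLab := (5, 2)
def ltLab : CodeLab := (6, 2)
def pairLab : CodeLab := (7, 3)
def eLab (d : Code) : CodeLab := (8 + 2 * Encodable.encode d, 2)
def auxLab (d : Code) : CodeLab := (9 + 2 * Encodable.encode d, 3)

def baseRules : List RuleCode := [
  (addLab, 2, [(zeroLab, [1])], [0, 1, 0]),
  (addLab, 5, [(succLab, [1, 3]), (succLab, [2, 4]), (addLab, [0, 1, 2])], [0, 3, 4]),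
  (mulLab, 2, [(zeroLab, [1])], [0, 1, 1]),
  (mulLab, 5, [(succLab, [1, 3]), (mulLab, [0, 1, 2]), (addLab, [2, 0, 4])], [0, 3, 4]),
  (leLab, 3, [(addLab, [0, 1, 2])], [0, 2]),
  (ltLab, 3, [(succLab, [0, 1]), (leLab, [1, 2])], [0, 2]),
  (pairLab, 4, [(ltLab, [0, 1]), (mulLab, [1, 1, 2]), (addLab, [2, 0, 3])], [0, 1, 3]),
  (pairLab, 5, [(leLab, [1, 0]), (mulLab, [0, 0, 2]), (addLab, [2, 0, 3]),
    (addLab, [3, 1, 4])], [0, 1, 4])]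

def codeRules : Code → List RuleCode
  | Code.zero => [(eLab Code.zero, 2, [(zeroLab, [1])], [0, 1])]
  | Code.succ => [(eLab Code.succ, 2, [(succLab, [0, 1])], [0, 1])]
  | Code.left => [(eLab Code.left, 3, [(pairLab, [1, 2, 0])], [0, 1])]
  | Code.right => [(eLab Code.right, 3, [(pairLab, [2, 1, 0])], [0, 1])]
  | Code.pair f g => [(eLab (Code.pair f g), 4,
      [(eLab f, [0, 1]), (eLab g, [0, 2]), (pairLab, [1, 2, 3])], [0, 3])]
  | Code.comp f g => [(eLab (Code.comp f g), 3,
      [(eLab g, [0, 1]), (eLab f, [1, 2])], [0, 2])]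
  | Code.prec f g => [
      (eLab (Code.prec f g), 4,
        [(pairLab, [1, 2, 0]), (auxLab (Code.prec f g), [1, 2, 3])], [0, 3]),
      (auxLab (Code.prec f g), 3, [(zeroLab, [1]), (eLab f, [0, 2])], [0, 1, 2]),
      (auxLab (Code.prec f g), 7,
        [(succLab, [1, 6]), (auxLab (Code.prec f g), [0, 1, 2]), (pairLab, [1, 2, 3]),
          (pairLab, [0, 3, 4]), (eLab g, [4, 5])], [0, 6, 5])]
  | Code.rfind' f => [
      (eLab (Code.rfind' f), 4,
        [(pairLab, [1, 2, 0]), (auxLab (Code.rfind' f), [1, 2, 3])], [0, 3]),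
      (auxLab (Code.rfind' f), 4,
        [(pairLab, [0, 1, 2]), (eLab f, [2, 3]), (zeroLab, [3])], [0, 1, 1]),
      (auxLab (Code.rfind' f), 7,
        [(pairLab, [0, 1, 2]), (eLab f, [2, 3]), (succLab, [4, 3]), (succLab, [1, 5]),
          (auxLab (Code.rfind' f), [0, 5, 6])], [0, 1, 6])]

def subcodes : Code → List Code
  | Code.pair f g => Code.pair f g :: (subcodes f ++ subcodes g)
  | Code.comp f g => Code.comp f g :: (subcodes f ++ subcodes g)
  | Code.prec f g => Code.prec f g :: (subcodes f ++ subcodes g)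
  | Code.rfind' f => Code.rfind' f :: subcodes f
  | d => [d]

def startRule (d : Code) : RuleCode :=
  (startLab, 2, [(zeroLab, [0]), (eLab d, [0, 1])], ([] : List ℕ))

def ntsOf (d : Code) : List CodeLab :=
  [startLab, addLab, mulLab, leLab, ltLab, pairLab] ++
    (subcodes d).flatMap (fun e => [eLab e, auxLab e])

def gram (d : Code) : FGGCode :=
  (ntsOf d, (startRule d :: baseRules) ++ (subcodes d).flatMap codeRules, startLab)

theorem self_mem_subcodes (d : Code) : d ∈ subcodes d := by
  cases d <;> simp [subcodes]

theorem subcodes_sub : ∀ {d e : Code}, e ∈ subcodes d → subcodes e ⊆ subcodes d := by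
  intro d
  induction d with
  | pair f g ihf ihg | comp f g ihf ihg | prec f g ihf ihg =>
    intro e he
    rw [subcodes] at he ⊢
    rcases List.mem_cons.mp he with rfl | he
    · exact fun x hx => hx
    · rcases List.mem_append.mp he with he | he
      · exact fun x hx => List.mem_cons_of_mem _ (List.mem_append_left _ (ihf he hx))
      · exact fun x hx => List.mem_cons_of_mem _ (List.mem_append_right _ (ihg he hx))
  | rfind' f ihf =>
    intro e he
    rw [subcodes] at he ⊢
    rcases List.mem_cons.mp he with rfl | he
    · exact fun x hx => hx
    · exact fun x hx => List.mem_cons_of_mem _ (ihf he hx)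
  | zero | succ | left | right =>
    intro e he
    simp [subcodes] at he
    subst he
    exact fun x hx => hx

theorem eLab_mem {c d : Code} (h : d ∈ subcodes c) : eLab d ∈ ntsOf c := by
  rw [ntsOf]
  refine List.mem_append_right _ ?_
  rw [List.mem_flatMap]
  exact ⟨d, h, by simp⟩

theorem auxLab_mem {c d : Code} (h : d ∈ subcodes c) : auxLab d ∈ ntsOf c := by
  rw [ntsOf]
  refine List.mem_append_right _ ?_
  rw [List.mem_flatMap]
  exact ⟨d, h, by simp⟩

theorem startLab_mem (c : Code) : startLab ∈ ntsOf c := by simp [ntsOf]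
theorem addLab_mem (c : Code) : addLab ∈ ntsOf c := by simp [ntsOf]
theorem mulLab_mem (c : Code) : mulLab ∈ ntsOf c := by simp [ntsOf]
theorem leLab_mem (c : Code) : leLab ∈ ntsOf c := by simp [ntsOf]
theorem ltLab_mem (c : Code) : ltLab ∈ ntsOf c := by simp [ntsOf]
theorem pairLab_mem (c : Code) : pairLab ∈ ntsOf c := by simp [ntsOf]

theorem mem_subcodes_pair_left (f g : Code) : f ∈ subcodes (Code.pair f g) := by
  rw [subcodes]; exact List.mem_cons_of_mem _ (List.mem_append_left _ (self_mem_subcodes f))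
theorem mem_subcodes_pair_right (f g : Code) : g ∈ subcodes (Code.pair f g) := by
  rw [subcodes]; exact List.mem_cons_of_mem _ (List.mem_append_right _ (self_mem_subcodes g))
theorem mem_subcodes_comp_left (f g : Code) : f ∈ subcodes (Code.comp f g) := by
  rw [subcodes]; exact List.mem_cons_of_mem _ (List.mem_append_left _ (self_mem_subcodes f))
theorem mem_subcodes_comp_right (f g : Code) : g ∈ subcodes (Code.comp f g) := by
  rw [subcodes]; exact List.mem_cons_of_mem _ (List.mem_append_right _ (self_mem_subcodes g))
theorem mem_subcodes_prec_left (f g : Code) : f ∈ subcodes (Code.prec f g) := by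
  rw [subcodes]; exact List.mem_cons_of_mem _ (List.mem_append_left _ (self_mem_subcodes f))
theorem mem_subcodes_prec_right (f g : Code) : g ∈ subcodes (Code.prec f g) := by
  rw [subcodes]; exact List.mem_cons_of_mem _ (List.mem_append_right _ (self_mem_subcodes g))
theorem mem_subcodes_rfind (f : Code) : f ∈ subcodes (Code.rfind' f) := by
  rw [subcodes]; exact List.mem_cons_of_mem _ (self_mem_subcodes f)

theorem wfrule_help (nts : List CodeLab) (r : RuleCode) (h1 : r.1 ∈ nts)
    (h2 : ∀ ed ∈ r.2.2.1, ed.1 ∈ nts ∨ ed.1 = zeroLab ∨ ed.1 = succLab)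
    (h3 : ∀ ed ∈ r.2.2.1, ed.2.length = ed.1.2 ∧ ∀ v ∈ ed.2, v < r.2.1)
    (h4 : r.2.2.2.length = r.1.2) (h5 : ∀ v ∈ r.2.2.2, v < r.2.1) : WFRule nts r :=
  ⟨h1, fun ed hed => ⟨h2 ed hed, (h3 ed hed).1, (h3 ed hed).2⟩, h4, h5⟩

theorem wf_gram (c : Code) : WF (gram c) := by
  refine ⟨?_, startLab_mem c, rfl, ?_⟩
  · intro a ha
    have ha' : a ∈ ntsOf c := ha
    rw [ntsOf] at ha'
    rcases List.mem_append.mp ha' with h | h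
    · simp at h
      rcases h with rfl | rfl | rfl | rfl | rfl | rfl <;> decide
    · obtain ⟨e, he, hae⟩ := List.mem_flatMap.mp h
      simp at hae
      rcases hae with rfl | rfl <;> simp [eLab, auxLab] <;> omega
  · intro r hr
    have hr' : r ∈ (startRule c :: baseRules) ++ (subcodes c).flatMap codeRules := hr
    rcases List.mem_append.mp hr' with h | h
    · rcases List.mem_cons.mp h with rfl | h
      · refine wfrule_help _ _ (startLab_mem c) ?_ ?_ rfl (by simp [startRule])
        · intro ed hed
          simp [startRule] at hed
          rcases hed with rfl | rfl
          · exact Or.inr (Or.inl rfl)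
          · exact Or.inl (eLab_mem (self_mem_subcodes c))
        · intro ed hed
          simp [startRule] at hed
          rcases hed with rfl | rfl
          · exact ⟨rfl, by intro v hv; simp [startRule] at hv ⊢; omega⟩
          · exact ⟨rfl, by intro v hv; simp [startRule] at hv ⊢; omega⟩
      · simp only [baseRules, List.mem_cons, List.not_mem_nil, or_false] at h
        rcases h with rfl | rfl | rfl | rfl | rfl | rfl | rfl | rfl <;>
          refine wfrule_help _ _ ?_ ?_ (by decide) (by decide) (by decide) <;>
          first
            | exact addLab_mem c
            | exact mulLab_mem c
            | exact leLab_mem c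
            | exact ltLab_mem c
            | exact pairLab_mem c
            | (intro ed hed; simp at hed;
               rcases hed with rfl | rfl | rfl | rfl <;>
               first
                 | exact Or.inr (Or.inl rfl)
                 | exact Or.inr (Or.inr rfl)
                 | exact Or.inl (addLab_mem c)
                 | exact Or.inl (mulLab_mem c)
                 | exact Or.inl (leLab_mem c)
                 | exact Or.inl (ltLab_mem c)
                 | exact Or.inl (pairLab_mem c))
    · obtain ⟨d, hd, hrd⟩ := List.mem_flatMap.mp h
      cases d with
      | zero =>
        simp only [codeRules, List.mem_cons, List.not_mem_nil, or_false] at hrd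
        subst hrd
        refine wfrule_help _ _ (eLab_mem hd) ?_ (by decide) rfl (by intro v hv; simp at hv ⊢; omega)
        intro ed hed; simp at hed; subst hed
        exact Or.inr (Or.inl rfl)
      | succ =>
        simp only [codeRules, List.mem_cons, List.not_mem_nil, or_false] at hrd
        subst hrd
        refine wfrule_help _ _ (eLab_mem hd) ?_ (by decide) rfl (by intro v hv; simp at hv ⊢; omega)
        intro ed hed; simp at hed; subst hed
        exact Or.inr (Or.inr rfl)
      | left =>
        simp only [codeRules, List.mem_cons, List.not_mem_nil, or_false] at hrd
        subst hrd
        refine wfrule_help _ _ (eLab_mem hd) ?_ (by decide) rfl (by intro v hv; simp at hv ⊢; omega)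
        intro ed hed; simp at hed; subst hed
        exact Or.inl (pairLab_mem c)
      | right =>
        simp only [codeRules, List.mem_cons, List.not_mem_nil, or_false] at hrd
        subst hrd
        refine wfrule_help _ _ (eLab_mem hd) ?_ (by decide) rfl (by intro v hv; simp at hv ⊢; omega)
        intro ed hed; simp at hed; subst hed
        exact Or.inl (pairLab_mem c)
      | pair f g =>
        simp only [codeRules, List.mem_cons, List.not_mem_nil, or_false] at hrd
        subst hrd
        refine wfrule_help _ _ (eLab_mem hd) ?_ ?_ rfl (by intro v hv; simp at hv ⊢; omega)
        · intro ed hed; simp at hed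
          rcases hed with rfl | rfl | rfl
          · exact Or.inl (eLab_mem (subcodes_sub hd (mem_subcodes_pair_left f g)))
          · exact Or.inl (eLab_mem (subcodes_sub hd (mem_subcodes_pair_right f g)))
          · exact Or.inl (pairLab_mem c)
        · intro ed hed; simp at hed
          rcases hed with rfl | rfl | rfl <;>
            exact ⟨rfl, by intro v hv; simp at hv ⊢; omega⟩
      | comp f g =>
        simp only [codeRules, List.mem_cons, List.not_mem_nil, or_false] at hrd
        subst hrd
        refine wfrule_help _ _ (eLab_mem hd) ?_ ?_ rfl (by intro v hv; simp at hv ⊢; omega)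
        · intro ed hed; simp at hed
          rcases hed with rfl | rfl
          · exact Or.inl (eLab_mem (subcodes_sub hd (mem_subcodes_comp_right f g)))
          · exact Or.inl (eLab_mem (subcodes_sub hd (mem_subcodes_comp_left f g)))
        · intro ed hed; simp at hed
          rcases hed with rfl | rfl <;>
            exact ⟨rfl, by intro v hv; simp at hv ⊢; omega⟩
      | prec f g =>
        simp only [codeRules, List.mem_cons, List.not_mem_nil, or_false] at hrd
        rcases hrd with rfl | rfl | rfl
        · refine wfrule_help _ _ (eLab_mem hd) ?_ ?_ rfl (by intro v hv; simp at hv ⊢; omega)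
          · intro ed hed; simp at hed
            rcases hed with rfl | rfl
            · exact Or.inl (pairLab_mem c)
            · exact Or.inl (auxLab_mem hd)
          · intro ed hed; simp at hed
            rcases hed with rfl | rfl <;>
              exact ⟨rfl, by intro v hv; simp at hv ⊢; omega⟩
        · refine wfrule_help _ _ (auxLab_mem hd) ?_ ?_ rfl (by intro v hv; simp at hv ⊢; omega)
          · intro ed hed; simp at hed
            rcases hed with rfl | rfl
            · exact Or.inr (Or.inl rfl)
            · exact Or.inl (eLab_mem (subcodes_sub hd (mem_subcodes_prec_left f g)))
          · intro ed hed; simp at hed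
            rcases hed with rfl | rfl <;>
              exact ⟨rfl, by intro v hv; simp at hv ⊢; omega⟩
        · refine wfrule_help _ _ (auxLab_mem hd) ?_ ?_ rfl (by intro v hv; simp at hv ⊢; omega)
          · intro ed hed; simp at hed
            rcases hed with rfl | rfl | rfl | rfl | rfl
            · exact Or.inr (Or.inr rfl)
            · exact Or.inl (auxLab_mem hd)
            · exact Or.inl (pairLab_mem c)
            · exact Or.inl (pairLab_mem c)
            · exact Or.inl (eLab_mem (subcodes_sub hd (mem_subcodes_prec_right f g)))
          · intro ed hed; simp at hed
            rcases hed with rfl | rfl | rfl | rfl | rfl <;>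
              exact ⟨rfl, by intro v hv; simp at hv ⊢; omega⟩
      | rfind' f =>
        simp only [codeRules, List.mem_cons, List.not_mem_nil, or_false] at hrd
        rcases hrd with rfl | rfl | rfl
        · refine wfrule_help _ _ (eLab_mem hd) ?_ ?_ rfl (by intro v hv; simp at hv ⊢; omega)
          · intro ed hed; simp at hed
            rcases hed with rfl | rfl
            · exact Or.inl (pairLab_mem c)
            · exact Or.inl (auxLab_mem hd)
          · intro ed hed; simp at hed
            rcases hed with rfl | rfl <;>
              exact ⟨rfl, by intro v hv; simp at hv ⊢; omega⟩
        · refine wfrule_help _ _ (auxLab_mem hd) ?_ ?_ rfl (by intro v hv; simp at hv ⊢; omega)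
          · intro ed hed; simp at hed
            rcases hed with rfl | rfl | rfl
            · exact Or.inl (pairLab_mem c)
            · exact Or.inl (eLab_mem (subcodes_sub hd (mem_subcodes_rfind f)))
            · exact Or.inr (Or.inl rfl)
          · intro ed hed; simp at hed
            rcases hed with rfl | rfl | rfl <;>
              exact ⟨rfl, by intro v hv; simp at hv ⊢; omega⟩
        · refine wfrule_help _ _ (auxLab_mem hd) ?_ ?_ rfl (by intro v hv; simp at hv ⊢; omega)
          · intro ed hed; simp at hed
            rcases hed with rfl | rfl | rfl | rfl | rfl
            · exact Or.inl (pairLab_mem c)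
            · exact Or.inl (eLab_mem (subcodes_sub hd (mem_subcodes_rfind f)))
            · exact Or.inr (Or.inr rfl)
            · exact Or.inr (Or.inr rfl)
            · exact Or.inl (auxLab_mem hd)
          · intro ed hed; simp at hed
            rcases hed with rfl | rfl | rfl | rfl | rfl <;>
              exact ⟨rfl, by intro v hv; simp at hv ⊢; omega⟩

open scoped ENNReal Classical
open Nat.Partrec (Code)
open Nat.Partrec.Code (eval)

/-- The recursion used in the semantics of `prec`. -/
def precSem (f g : Code) (a : ℕ) : ℕ → Part ℕ :=
  fun b => (b.rec (eval f a)
    (fun j ih => ih >>= fun z => eval g (Nat.pair a (Nat.pair j z))) : Part ℕ)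

/-- The intended denotation of each nonterminal of `gram c`. -/
def denote (c : Code) (X : CodeLab) (w : List ℕ) : Prop :=
  (X = startLab ∧ w = [] ∧ ∃ y, y ∈ eval c 0) ∨
  (X = addLab ∧ ∃ x y : ℕ, w = [x, y, x + y]) ∨
  (X = mulLab ∧ ∃ x y : ℕ, w = [x, y, x * y]) ∨
  (X = leLab ∧ ∃ x y : ℕ, w = [x, y] ∧ x ≤ y) ∨
  (X = ltLab ∧ ∃ x y : ℕ, w = [x, y] ∧ x < y) ∨
  (X = pairLab ∧ ∃ x y : ℕ, w = [x, y, Nat.pair x y]) ∨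
  (∃ d : Code, X = eLab d ∧ ∃ x y, w = [x, y] ∧ y ∈ eval d x) ∨
  (∃ f g : Code, X = auxLab (Code.prec f g) ∧
    ∃ a i y, w = [a, i, y] ∧ y ∈ precSem f g a i) ∨
  (∃ f : Code, X = auxLab (Code.rfind' f) ∧
    ∃ a m y, w = [a, m, y] ∧ y ∈ eval (Code.rfind' f) (Nat.pair a m))

theorem eLab_inj {d d' : Code} (h : eLab d = eLab d') : d = d' := by
  simp only [eLab, Prod.mk.injEq] at h
  exact Encodable.encode_injective (by omega)

theorem auxLab_inj {d d' : Code} (h : auxLab d = auxLab d') : d = d' := by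
  simp only [auxLab, Prod.mk.injEq] at h
  exact Encodable.encode_injective (by omega)

section Inversions

variable {c : Code} {w : List ℕ}

set_option maxHeartbeats 1000000 in
theorem denote_start_inv (h : denote c startLab w) : w = [] ∧ ∃ y, y ∈ eval c 0 := by
  rcases h with ⟨h,hx⟩|⟨h,hx⟩|⟨h,hx⟩|⟨h,hx⟩|⟨h,hx⟩|⟨h,hx⟩|⟨d',h,hx⟩|⟨f',g',h,hx⟩|⟨f',h,hx⟩ <;>
  first
    | exact hx
    | (exfalso; simp [startLab, addLab, mulLab, leLab, ltLab, pairLab,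
        eLab, auxLab, Prod.ext_iff] at h; try omega)

set_option maxHeartbeats 1000000 in
theorem denote_add_inv (h : denote c addLab w) : ∃ x y : ℕ, w = [x, y, x + y] := by
  rcases h with ⟨h,hx⟩|⟨h,hx⟩|⟨h,hx⟩|⟨h,hx⟩|⟨h,hx⟩|⟨h,hx⟩|⟨d',h,hx⟩|⟨f',g',h,hx⟩|⟨f',h,hx⟩ <;>
  first
    | exact hx
    | (exfalso; simp [startLab, addLab, mulLab, leLab, ltLab, pairLab,
        eLab, auxLab, Prod.ext_iff] at h; try omega)

set_option maxHeartbeats 1000000 in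
theorem denote_mul_inv (h : denote c mulLab w) : ∃ x y : ℕ, w = [x, y, x * y] := by
  rcases h with ⟨h,hx⟩|⟨h,hx⟩|⟨h,hx⟩|⟨h,hx⟩|⟨h,hx⟩|⟨h,hx⟩|⟨d',h,hx⟩|⟨f',g',h,hx⟩|⟨f',h,hx⟩ <;>
  first
    | exact hx
    | (exfalso; simp [startLab, addLab, mulLab, leLab, ltLab, pairLab,
        eLab, auxLab, Prod.ext_iff] at h; try omega)

set_option maxHeartbeats 1000000 in
theorem denote_le_inv (h : denote c leLab w) : ∃ x y : ℕ, w = [x, y] ∧ x ≤ y := by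
  rcases h with ⟨h,hx⟩|⟨h,hx⟩|⟨h,hx⟩|⟨h,hx⟩|⟨h,hx⟩|⟨h,hx⟩|⟨d',h,hx⟩|⟨f',g',h,hx⟩|⟨f',h,hx⟩ <;>
  first
    | exact hx
    | (exfalso; simp [startLab, addLab, mulLab, leLab, ltLab, pairLab,
        eLab, auxLab, Prod.ext_iff] at h; try omega)

set_option maxHeartbeats 1000000 in
theorem denote_lt_inv (h : denote c ltLab w) : ∃ x y : ℕ, w = [x, y] ∧ x < y := by
  rcases h with ⟨h,hx⟩|⟨h,hx⟩|⟨h,hx⟩|⟨h,hx⟩|⟨h,hx⟩|⟨h,hx⟩|⟨d',h,hx⟩|⟨f',g',h,hx⟩|⟨f',h,hx⟩ <;>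
  first
    | exact hx
    | (exfalso; simp [startLab, addLab, mulLab, leLab, ltLab, pairLab,
        eLab, auxLab, Prod.ext_iff] at h; try omega)

set_option maxHeartbeats 1000000 in
theorem denote_pair_inv (h : denote c pairLab w) :
    ∃ x y : ℕ, w = [x, y, Nat.pair x y] := by
  rcases h with ⟨h,hx⟩|⟨h,hx⟩|⟨h,hx⟩|⟨h,hx⟩|⟨h,hx⟩|⟨h,hx⟩|⟨d',h,hx⟩|⟨f',g',h,hx⟩|⟨f',h,hx⟩ <;>
  first
    | exact hx
    | (exfalso; simp [startLab, addLab, mulLab, leLab, ltLab, pairLab,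
        eLab, auxLab, Prod.ext_iff] at h; try omega)

set_option maxHeartbeats 1000000 in
theorem denote_e_inv {d : Code} (h : denote c (eLab d) w) :
    ∃ x y, w = [x, y] ∧ y ∈ eval d x := by
  rcases h with ⟨h,hx⟩|⟨h,hx⟩|⟨h,hx⟩|⟨h,hx⟩|⟨h,hx⟩|⟨h,hx⟩|⟨d',h,hx⟩|⟨f',g',h,hx⟩|⟨f',h,hx⟩ <;>
  first
    | (rw [eLab_inj h]; exact hx)
    | (exfalso; simp [startLab, addLab, mulLab, leLab, ltLab, pairLab,
        eLab, auxLab, Prod.ext_iff] at h; try omega)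

set_option maxHeartbeats 1000000 in
theorem denote_auxprec_inv {f g : Code} (h : denote c (auxLab (Code.prec f g)) w) :
    ∃ a i y, w = [a, i, y] ∧ y ∈ precSem f g a i := by
  rcases h with ⟨h,hx⟩|⟨h,hx⟩|⟨h,hx⟩|⟨h,hx⟩|⟨h,hx⟩|⟨h,hx⟩|⟨d',h,hx⟩|⟨f',g',h,hx⟩|⟨f',h,hx⟩ <;>
  first
    | (injection (auxLab_inj h) with h1 h2; subst h1; subst h2; exact hx)
    | (injection (auxLab_inj h))
    | (exfalso; simp [startLab, addLab, mulLab, leLab, ltLab, pairLab,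
        eLab, auxLab, Prod.ext_iff] at h; try omega)

set_option maxHeartbeats 1000000 in
theorem denote_auxrfind_inv {f : Code} (h : denote c (auxLab (Code.rfind' f)) w) :
    ∃ a m y, w = [a, m, y] ∧ y ∈ eval (Code.rfind' f) (Nat.pair a m) := by
  rcases h with ⟨h,hx⟩|⟨h,hx⟩|⟨h,hx⟩|⟨h,hx⟩|⟨h,hx⟩|⟨h,hx⟩|⟨d',h,hx⟩|⟨f',g',h,hx⟩|⟨f',h,hx⟩ <;>
  first
    | (injection (auxLab_inj h) with h1; subst h1; exact hx)
    | (injection (auxLab_inj h))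
    | (exfalso; simp [startLab, addLab, mulLab, leLab, ltLab, pairLab,
        eLab, auxLab, Prod.ext_iff] at h; try omega)

end Inversions

theorem zf_ne {x : ℕ} (h : zeroFactor [x] ≠ 0) : x = 0 := by
  by_contra hx
  simp [zeroFactor, hx] at h

theorem sf_ne {x y : ℕ} (h : succFactor [x, y] ≠ 0) : y = x + 1 := by
  by_contra hx
  simp [succFactor, hx] at h

theorem zf_pos : zeroFactor [0] ≠ 0 := by simp [zeroFactor]

theorem sf_pos (x : ℕ) : succFactor [x, x + 1] ≠ 0 := by simp [succFactor]

theorem precSem_zero (f g : Code) (a : ℕ) : precSem f g a 0 = eval f a := rfl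

theorem precSem_succ (f g : Code) (a i : ℕ) :
    precSem f g a (i + 1) =
      Part.bind (precSem f g a i) (fun z => eval g (Nat.pair a (Nat.pair i z))) := rfl

theorem eval_prec_eq (f g : Code) (a b : ℕ) :
    eval (Code.prec f g) (Nat.pair a b) = precSem f g a b := by
  induction b with
  | zero => exact Nat.Partrec.Code.eval_prec_zero f g a
  | succ b ih =>
    rw [Nat.Partrec.Code.eval_prec_succ, precSem_succ, ih]
    rfl

theorem eval_rfind_pair (f : Code) (a m : ℕ) :
    eval (Code.rfind' f) (Nat.pair a m) =
      (Nat.rfind fun n => (fun x => x = 0) <$> eval f (Nat.pair a (n + m))).map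
        (· + m) := by
  simp [Nat.Partrec.Code.eval, Nat.unpaired]

theorem mem_eval_rfind {f : Code} {a m y : ℕ} :
    y ∈ eval (Code.rfind' f) (Nat.pair a m) ↔
      ∃ n, y = n + m ∧ 0 ∈ eval f (Nat.pair a (n + m)) ∧
        ∀ k < n, ∃ z, z ∈ eval f (Nat.pair a (k + m)) ∧ z ≠ 0 := by
  rw [eval_rfind_pair, Part.mem_map_iff]
  constructor
  · rintro ⟨n, hn, rfl⟩
    erw [Nat.mem_rfind] at hn
    obtain ⟨h1, h2⟩ := hn
    rw [Part.map_eq_map, Part.mem_map_iff] at h1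
    obtain ⟨x, hx, hx0⟩ := h1
    refine ⟨n, rfl, ?_, ?_⟩
    · rwa [show x = 0 from of_decide_eq_true hx0] at hx
    · intro k hk
      have := h2 hk
      rw [Part.map_eq_map, Part.mem_map_iff] at this
      obtain ⟨z, hz, hz0⟩ := this
      exact ⟨z, hz, of_decide_eq_false hz0⟩
  · rintro ⟨n, rfl, h1, h2⟩
    refine ⟨n, ?_, rfl⟩
    erw [Nat.mem_rfind]
    constructor
    · rw [Part.map_eq_map, Part.mem_map_iff]
      exact ⟨0, h1, by simp⟩
    · intro k hk
      obtain ⟨z, hz, hz0⟩ := h2 k hk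
      rw [Part.map_eq_map, Part.mem_map_iff]
      exact ⟨z, hz, by simp [hz0]⟩

section Intros
variable {c : Code} {w : List ℕ}

theorem denote_start_intro (hw : w = []) (h : ∃ y, y ∈ eval c 0) :
    denote c startLab w := Or.inl ⟨rfl, hw, h⟩
theorem denote_add_intro {x y : ℕ} (hw : w = [x, y, x + y]) : denote c addLab w :=
  Or.inr (Or.inl ⟨rfl, x, y, hw⟩)
theorem denote_mul_intro {x y : ℕ} (hw : w = [x, y, x * y]) : denote c mulLab w :=
  Or.inr (Or.inr (Or.inl ⟨rfl, x, y, hw⟩))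
theorem denote_le_intro {x y : ℕ} (hw : w = [x, y]) (h : x ≤ y) : denote c leLab w :=
  Or.inr (Or.inr (Or.inr (Or.inl ⟨rfl, x, y, hw, h⟩)))
theorem denote_lt_intro {x y : ℕ} (hw : w = [x, y]) (h : x < y) : denote c ltLab w :=
  Or.inr (Or.inr (Or.inr (Or.inr (Or.inl ⟨rfl, x, y, hw, h⟩))))
theorem denote_pair_intro {x y : ℕ} (hw : w = [x, y, Nat.pair x y]) :
    denote c pairLab w :=
  Or.inr (Or.inr (Or.inr (Or.inr (Or.inr (Or.inl ⟨rfl, x, y, hw⟩)))))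
theorem denote_e_intro {d : Code} {x y : ℕ} (hw : w = [x, y]) (h : y ∈ eval d x) :
    denote c (eLab d) w :=
  Or.inr (Or.inr (Or.inr (Or.inr (Or.inr (Or.inr (Or.inl ⟨d, rfl, x, y, hw, h⟩))))))
theorem denote_auxprec_intro {f g : Code} {a i y : ℕ} (hw : w = [a, i, y])
    (h : y ∈ precSem f g a i) : denote c (auxLab (Code.prec f g)) w :=
  Or.inr (Or.inr (Or.inr (Or.inr (Or.inr (Or.inr (Or.inr (Or.inl
    ⟨f, g, rfl, a, i, y, hw, h⟩)))))))
theorem denote_auxrfind_intro {f : Code} {a m y : ℕ} (hw : w = [a, m, y])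
    (h : y ∈ eval (Code.rfind' f) (Nat.pair a m)) :
    denote c (auxLab (Code.rfind' f)) w :=
  Or.inr (Or.inr (Or.inr (Or.inr (Or.inr (Or.inr (Or.inr (Or.inr
    ⟨f, rfl, a, m, y, hw, h⟩)))))))
end Intros

theorem csat_sound (c : Code) {X : CodeLab} {w : List ℕ}
    (hs : CSat (gram c) X w) : denote c X w := by
  induction hs with
  | mk r hr ν hz hsc hn ihn =>
    clear hn
    have hr' : r ∈ (startRule c :: baseRules) ++ (subcodes c).flatMap codeRules := hr
    clear hr
    rcases List.mem_append.mp hr' with hmem | hmem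
    · rcases List.mem_cons.mp hmem with rfl | hmem
      · -- start rule
        have h1 : ν 0 = 0 := zf_ne (hz (zeroLab, [0]) (by simp [startRule]) rfl)
        obtain ⟨x, y, hxy, hy⟩ := denote_e_inv
          (ihn (eLab c, [0, 1]) (by simp [startRule]) (eLab_mem (self_mem_subcodes c)))
        obtain ⟨hx1, hx2⟩ : ν 0 = x ∧ ν 1 = y := by
          simpa using hxy
        refine denote_start_intro rfl ⟨y, ?_⟩
        rw [← hx1, h1] at hy
        exact hy
      · simp only [baseRules, List.mem_cons, List.not_mem_nil, or_false] at hmem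
        rcases hmem with rfl | rfl | rfl | rfl | rfl | rfl | rfl | rfl
        · -- A1
          have h1 : ν 1 = 0 := zf_ne (hz (zeroLab, [1]) (by simp) rfl)
          exact denote_add_intro (x := ν 0) (y := ν 1) (by simp [h1])
        · -- A2
          have h1 := sf_ne (hsc (succLab, [1, 3]) (by simp) rfl)
          have h2 := sf_ne (hsc (succLab, [2, 4]) (by simp) rfl)
          obtain ⟨x, y, hxy⟩ := denote_add_inv
            (ihn (addLab, [0, 1, 2]) (by simp) (addLab_mem c))
          obtain ⟨hx1, hx2, hx3⟩ : ν 0 = x ∧ ν 1 = y ∧ ν 2 = x + y := by simpa using hxy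
          exact denote_add_intro (x := ν 0) (y := ν 3) (by simp; omega)
        · -- M1
          have h1 : ν 1 = 0 := zf_ne (hz (zeroLab, [1]) (by simp) rfl)
          exact denote_mul_intro (x := ν 0) (y := ν 1) (by simp [h1])
        · -- M2
          have h1 := sf_ne (hsc (succLab, [1, 3]) (by simp) rfl)
          obtain ⟨x, y, hxy⟩ := denote_mul_inv
            (ihn (mulLab, [0, 1, 2]) (by simp) (mulLab_mem c))
          obtain ⟨hx1, hx2, hx3⟩ : ν 0 = x ∧ ν 1 = y ∧ ν 2 = x * y := by simpa using hxy
          obtain ⟨x', y', hxy'⟩ := denote_add_inv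
            (ihn (addLab, [2, 0, 4]) (by simp) (addLab_mem c))
          obtain ⟨hy1, hy2, hy3⟩ : ν 2 = x' ∧ ν 0 = y' ∧ ν 4 = x' + y' := by simpa using hxy'
          subst hx1; subst hx2; subst hy1; subst hy2
          refine denote_mul_intro (x := ν 0) (y := ν 3) (by
            simp
            rw [h1]
            have : ν 0 * (ν 1 + 1) = ν 0 * ν 1 + ν 0 := by ring
            omega)
        · -- LE
          obtain ⟨x, y, hxy⟩ := denote_add_inv
            (ihn (addLab, [0, 1, 2]) (by simp) (addLab_mem c))
          obtain ⟨hx1, hx2, hx3⟩ : ν 0 = x ∧ ν 1 = y ∧ ν 2 = x + y := by simpa using hxy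
          exact denote_le_intro (x := ν 0) (y := ν 2) (by simp) (by omega)
        · -- LT
          have h1 := sf_ne (hsc (succLab, [0, 1]) (by simp) rfl)
          obtain ⟨x, y, hxy, hle⟩ := denote_le_inv
            (ihn (leLab, [1, 2]) (by simp) (leLab_mem c))
          obtain ⟨hx1, hx2⟩ : ν 1 = x ∧ ν 2 = y := by simpa using hxy
          exact denote_lt_intro (x := ν 0) (y := ν 2) (by simp) (by omega)
        · -- P1
          obtain ⟨x, y, hxy, hlt⟩ := denote_lt_inv
            (ihn (ltLab, [0, 1]) (by simp) (ltLab_mem c))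
          obtain ⟨hx1, hx2⟩ : ν 0 = x ∧ ν 1 = y := by simpa using hxy
          obtain ⟨x', y', hxy'⟩ := denote_mul_inv
            (ihn (mulLab, [1, 1, 2]) (by simp) (mulLab_mem c))
          obtain ⟨hy1, hy2, hy3⟩ : ν 1 = x' ∧ ν 1 = y' ∧ ν 2 = x' * y' := by simpa using hxy'
          obtain ⟨x'', y'', hxy''⟩ := denote_add_inv
            (ihn (addLab, [2, 0, 3]) (by simp) (addLab_mem c))
          obtain ⟨hz1, hz2, hz3⟩ : ν 2 = x'' ∧ ν 0 = y'' ∧ ν 3 = x'' + y'' := by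
            simpa using hxy''
          subst hx1; subst hx2; subst hy1; subst hy2; subst hz1; subst hz2
          refine denote_pair_intro (x := ν 0) (y := ν 1) (by
            simp
            rw [Nat.pair, if_pos (by omega : ν 0 < ν 1)]
            omega)
        · -- P2
          obtain ⟨x, y, hxy, hle⟩ := denote_le_inv
            (ihn (leLab, [1, 0]) (by simp) (leLab_mem c))
          obtain ⟨hx1, hx2⟩ : ν 1 = x ∧ ν 0 = y := by simpa using hxy
          obtain ⟨x', y', hxy'⟩ := denote_mul_inv
            (ihn (mulLab, [0, 0, 2]) (by simp) (mulLab_mem c))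
          obtain ⟨hy1, hy2, hy3⟩ : ν 0 = x' ∧ ν 0 = y' ∧ ν 2 = x' * y' := by simpa using hxy'
          obtain ⟨x'', y'', hxy''⟩ := denote_add_inv
            (ihn (addLab, [2, 0, 3]) (by simp) (addLab_mem c))
          obtain ⟨hz1, hz2, hz3⟩ : ν 2 = x'' ∧ ν 0 = y'' ∧ ν 3 = x'' + y'' := by
            simpa using hxy''
          obtain ⟨x3, y3, hxy3⟩ := denote_add_inv
            (ihn (addLab, [3, 1, 4]) (by simp) (addLab_mem c))
          obtain ⟨hw1, hw2, hw3⟩ : ν 3 = x3 ∧ ν 1 = y3 ∧ ν 4 = x3 + y3 := by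
            simpa using hxy3
          subst hx1; subst hx2; subst hy1; subst hy2; subst hz1; subst hz2
          subst hw1; subst hw2
          refine denote_pair_intro (x := ν 0) (y := ν 1) (by
            simp
            rw [Nat.pair, if_neg (by omega : ¬ ν 0 < ν 1)]
            omega)
    · obtain ⟨d, hd, hrd⟩ := List.mem_flatMap.mp hmem
      cases d with
      | zero =>
        simp only [codeRules, List.mem_cons, List.not_mem_nil, or_false] at hrd
        subst hrd
        have h1 : ν 1 = 0 := zf_ne (hz (zeroLab, [1]) (by simp) rfl)
        refine denote_e_intro (x := ν 0) (y := ν 1) (by simp) ?_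
        rw [h1]
        show (0 : ℕ) ∈ Part.some 0
        exact ⟨trivial, rfl⟩
      | succ =>
        simp only [codeRules, List.mem_cons, List.not_mem_nil, or_false] at hrd
        subst hrd
        have h1 := sf_ne (hsc (succLab, [0, 1]) (by simp) rfl)
        refine denote_e_intro (x := ν 0) (y := ν 1) (by simp) ?_
        rw [h1]
        simp [Nat.Partrec.Code.eval]
      | left =>
        simp only [codeRules, List.mem_cons, List.not_mem_nil, or_false] at hrd
        subst hrd
        obtain ⟨x, y, hxy⟩ := denote_pair_inv
          (ihn (pairLab, [1, 2, 0]) (by simp) (pairLab_mem c))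
        obtain ⟨hx1, hx2, hx3⟩ : ν 1 = x ∧ ν 2 = y ∧ ν 0 = Nat.pair x y := by
          simpa using hxy
        refine denote_e_intro (x := ν 0) (y := ν 1) (by simp) ?_
        rw [hx3, hx1]
        simp [Nat.Partrec.Code.eval]
      | right =>
        simp only [codeRules, List.mem_cons, List.not_mem_nil, or_false] at hrd
        subst hrd
        obtain ⟨x, y, hxy⟩ := denote_pair_inv
          (ihn (pairLab, [2, 1, 0]) (by simp) (pairLab_mem c))
        obtain ⟨hx1, hx2, hx3⟩ : ν 2 = x ∧ ν 1 = y ∧ ν 0 = Nat.pair x y := by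
          simpa using hxy
        refine denote_e_intro (x := ν 0) (y := ν 1) (by simp) ?_
        rw [hx3, hx2]
        simp [Nat.Partrec.Code.eval]
      | pair f g =>
        simp only [codeRules, List.mem_cons, List.not_mem_nil, or_false] at hrd
        subst hrd
        obtain ⟨x, y, hxy, hy⟩ := denote_e_inv (ihn (eLab f, [0, 1]) (by simp)
          (eLab_mem (subcodes_sub hd (mem_subcodes_pair_left f g))))
        obtain ⟨hx1, hx2⟩ : ν 0 = x ∧ ν 1 = y := by simpa using hxy
        obtain ⟨x', y', hxy', hy'⟩ := denote_e_inv (ihn (eLab g, [0, 2]) (by simp)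
          (eLab_mem (subcodes_sub hd (mem_subcodes_pair_right f g))))
        obtain ⟨hy1, hy2⟩ : ν 0 = x' ∧ ν 2 = y' := by simpa using hxy'
        obtain ⟨x'', y'', hxy''⟩ := denote_pair_inv
          (ihn (pairLab, [1, 2, 3]) (by simp) (pairLab_mem c))
        obtain ⟨hz1, hz2, hz3⟩ : ν 1 = x'' ∧ ν 2 = y'' ∧ ν 3 = Nat.pair x'' y'' := by
          simpa using hxy''
        refine denote_e_intro (x := ν 0) (y := ν 3) (by simp) ?_
        show ν 3 ∈ Part.bind (Part.map Nat.pair (eval f (ν 0)))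
          (fun q => Part.map q (eval g (ν 0)))
        rw [Part.mem_bind_iff]
        refine ⟨Nat.pair (ν 1), ?_, ?_⟩
        · rw [Part.mem_map_iff]
          exact ⟨ν 1, by rw [hx1]; rw [← hx2] at hy; exact hy, rfl⟩
        · rw [Part.mem_map_iff]
          refine ⟨ν 2, by rw [hy1]; rw [← hy2] at hy'; exact hy', ?_⟩
          rw [hz3, ← hz1, ← hz2]
      | comp f g =>
        simp only [codeRules, List.mem_cons, List.not_mem_nil, or_false] at hrd
        subst hrd
        obtain ⟨x, y, hxy, hy⟩ := denote_e_inv (ihn (eLab g, [0, 1]) (by simp)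
          (eLab_mem (subcodes_sub hd (mem_subcodes_comp_right f g))))
        obtain ⟨hx1, hx2⟩ : ν 0 = x ∧ ν 1 = y := by simpa using hxy
        obtain ⟨x', y', hxy', hy'⟩ := denote_e_inv (ihn (eLab f, [1, 2]) (by simp)
          (eLab_mem (subcodes_sub hd (mem_subcodes_comp_left f g))))
        obtain ⟨hy1, hy2⟩ : ν 1 = x' ∧ ν 2 = y' := by simpa using hxy'
        refine denote_e_intro (x := ν 0) (y := ν 2) (by simp) ?_
        show ν 2 ∈ Part.bind (eval g (ν 0)) (eval f)
        erw [Part.mem_bind_iff]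
        refine ⟨ν 1, by rw [hx1]; rw [← hx2] at hy; exact hy, ?_⟩
        rw [← hy1] at hy'
        rw [← hy2] at hy'
        exact hy'
      | prec f g =>
        simp only [codeRules, List.mem_cons, List.not_mem_nil, or_false] at hrd
        rcases hrd with rfl | rfl | rfl
        · obtain ⟨x, y, hxy⟩ := denote_pair_inv
            (ihn (pairLab, [1, 2, 0]) (by simp) (pairLab_mem c))
          obtain ⟨hx1, hx2, hx3⟩ : ν 1 = x ∧ ν 2 = y ∧ ν 0 = Nat.pair x y := by
            simpa using hxy
          obtain ⟨a, i, y', hxy', hy'⟩ := denote_auxprec_inv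
            (ihn (auxLab (Code.prec f g), [1, 2, 3]) (by simp) (auxLab_mem hd))
          obtain ⟨hy1, hy2, hy3⟩ : ν 1 = a ∧ ν 2 = i ∧ ν 3 = y' := by simpa using hxy'
          subst hx1; subst hx2; subst hy1; subst hy2; subst hy3
          refine denote_e_intro (x := ν 0) (y := ν 3) (by simp) ?_
          rw [hx3, eval_prec_eq]
          exact hy'
        · have h1 : ν 1 = 0 := zf_ne (hz (zeroLab, [1]) (by simp) rfl)
          obtain ⟨x, y, hxy, hy⟩ := denote_e_inv (ihn (eLab f, [0, 2]) (by simp)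
            (eLab_mem (subcodes_sub hd (mem_subcodes_prec_left f g))))
          obtain ⟨hx1, hx2⟩ : ν 0 = x ∧ ν 2 = y := by simpa using hxy
          refine denote_auxprec_intro (a := ν 0) (i := ν 1) (y := ν 2) (by simp) ?_
          rw [h1, precSem_zero, hx1]
          rw [← hx2] at hy
          exact hy
        · have h1 := sf_ne (hsc (succLab, [1, 6]) (by simp) rfl)
          obtain ⟨a, i, y, hxy, hy⟩ := denote_auxprec_inv
            (ihn (auxLab (Code.prec f g), [0, 1, 2]) (by simp) (auxLab_mem hd))
          obtain ⟨hx1, hx2, hx3⟩ : ν 0 = a ∧ ν 1 = i ∧ ν 2 = y := by simpa using hxy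
          obtain ⟨x', y', hxy'⟩ := denote_pair_inv
            (ihn (pairLab, [1, 2, 3]) (by simp) (pairLab_mem c))
          obtain ⟨hy1, hy2, hy3⟩ : ν 1 = x' ∧ ν 2 = y' ∧ ν 3 = Nat.pair x' y' := by
            simpa using hxy'
          obtain ⟨x'', y'', hxy''⟩ := denote_pair_inv
            (ihn (pairLab, [0, 3, 4]) (by simp) (pairLab_mem c))
          obtain ⟨hz1, hz2, hz3⟩ : ν 0 = x'' ∧ ν 3 = y'' ∧ ν 4 = Nat.pair x'' y'' := by
            simpa using hxy''
          obtain ⟨x3, y3, hxy3, hy3'⟩ := denote_e_inv (ihn (eLab g, [4, 5]) (by simp)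
            (eLab_mem (subcodes_sub hd (mem_subcodes_prec_right f g))))
          obtain ⟨hw1, hw2⟩ : ν 4 = x3 ∧ ν 5 = y3 := by simpa using hxy3
          refine denote_auxprec_intro (a := ν 0) (i := ν 6) (y := ν 5) (by simp) ?_
          rw [h1, precSem_succ, Part.mem_bind_iff]
          refine ⟨ν 2, ?_, ?_⟩
          · rw [← hx1, ← hx2, ← hx3] at hy
            exact hy
          · rw [← hw2] at hy3'
            rw [← hw1] at hy3'
            rw [hz3, ← hz1, ← hz2, hy3, ← hy1, ← hy2] at hy3'
            exact hy3'
      | rfind' f =>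
        simp only [codeRules, List.mem_cons, List.not_mem_nil, or_false] at hrd
        rcases hrd with rfl | rfl | rfl
        · obtain ⟨x, y, hxy⟩ := denote_pair_inv
            (ihn (pairLab, [1, 2, 0]) (by simp) (pairLab_mem c))
          obtain ⟨hx1, hx2, hx3⟩ : ν 1 = x ∧ ν 2 = y ∧ ν 0 = Nat.pair x y := by
            simpa using hxy
          obtain ⟨a, m, y', hxy', hy'⟩ := denote_auxrfind_inv
            (ihn (auxLab (Code.rfind' f), [1, 2, 3]) (by simp) (auxLab_mem hd))
          obtain ⟨hy1, hy2, hy3⟩ : ν 1 = a ∧ ν 2 = m ∧ ν 3 = y' := by simpa using hxy'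
          subst hx1; subst hx2; subst hy1; subst hy2; subst hy3
          refine denote_e_intro (x := ν 0) (y := ν 3) (by simp) ?_
          rw [hx3]
          exact hy'
        · obtain ⟨x, y, hxy⟩ := denote_pair_inv
            (ihn (pairLab, [0, 1, 2]) (by simp) (pairLab_mem c))
          obtain ⟨hx1, hx2, hx3⟩ : ν 0 = x ∧ ν 1 = y ∧ ν 2 = Nat.pair x y := by
            simpa using hxy
          subst hx1; subst hx2
          obtain ⟨x', y', hxy', hy'⟩ := denote_e_inv (ihn (eLab f, [2, 3]) (by simp)
            (eLab_mem (subcodes_sub hd (mem_subcodes_rfind f))))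
          obtain ⟨hy1, hy2⟩ : ν 2 = x' ∧ ν 3 = y' := by simpa using hxy'
          subst hy1; subst hy2
          have h3 : ν 3 = 0 := zf_ne (hz (zeroLab, [3]) (by simp) rfl)
          refine denote_auxrfind_intro (a := ν 0) (m := ν 1) (y := ν 1) (by simp) ?_
          rw [mem_eval_rfind]
          refine ⟨0, by omega, ?_, by omega⟩
          rw [Nat.zero_add]
          rw [h3, hx3] at hy'
          exact hy'
        · obtain ⟨x, y, hxy⟩ := denote_pair_inv
            (ihn (pairLab, [0, 1, 2]) (by simp) (pairLab_mem c))
          obtain ⟨hx1, hx2, hx3⟩ : ν 0 = x ∧ ν 1 = y ∧ ν 2 = Nat.pair x y := by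
            simpa using hxy
          subst hx1; subst hx2
          obtain ⟨x', y', hxy', hy'⟩ := denote_e_inv (ihn (eLab f, [2, 3]) (by simp)
            (eLab_mem (subcodes_sub hd (mem_subcodes_rfind f))))
          obtain ⟨hy1, hy2⟩ : ν 2 = x' ∧ ν 3 = y' := by simpa using hxy'
          subst hy1; subst hy2
          have h3 := sf_ne (hsc (succLab, [4, 3]) (by simp) rfl)
          have h5 := sf_ne (hsc (succLab, [1, 5]) (by simp) rfl)
          obtain ⟨a, m, y'', hxy'', hy''⟩ := denote_auxrfind_inv
            (ihn (auxLab (Code.rfind' f), [0, 5, 6]) (by simp) (auxLab_mem hd))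
          obtain ⟨hz1, hz2, hz3⟩ : ν 0 = a ∧ ν 5 = m ∧ ν 6 = y'' := by simpa using hxy''
          subst hz1; subst hz2; subst hz3
          refine denote_auxrfind_intro (a := ν 0) (m := ν 1) (y := ν 6) (by simp) ?_
          rw [mem_eval_rfind] at hy'' ⊢
          obtain ⟨n, hn1, hn2, hn3⟩ := hy''
          refine ⟨n + 1, by omega, ?_, ?_⟩
          · rw [show n + 1 + ν 1 = n + ν 5 from by omega]
            exact hn2
          · intro k hk
            rcases Nat.eq_zero_or_pos k with rfl | hkpos
            · refine ⟨ν 3, ?_, by omega⟩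
              rw [Nat.zero_add]
              rw [hx3] at hy'
              exact hy'
            · obtain ⟨j, rfl⟩ := Nat.exists_eq_add_of_lt hkpos
              obtain ⟨z, hz', hz0⟩ := hn3 j (by omega)
              refine ⟨z, ?_, hz0⟩
              rwa [show 0 + j + 1 + ν 1 = j + ν 5 from by omega]

open scoped ENNReal Classical
open Nat.Partrec (Code)
open Nat.Partrec.Code (eval)

theorem CSat.mk' (c' : FGGCode) (r : RuleCode) (hr : r ∈ c'.2.1) (ν : ℕ → ℕ)
    (X : CodeLab) (w : List ℕ) (hX : r.1 = X) (hw : r.2.2.2.map ν = w)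
    (hz : ∀ ed ∈ r.2.2.1, ed.1 = zeroLab → zeroFactor (ed.2.map ν) ≠ 0)
    (hs : ∀ ed ∈ r.2.2.1, ed.1 = succLab → succFactor (ed.2.map ν) ≠ 0)
    (hn : ∀ ed ∈ r.2.2.1, ed.1 ∈ c'.1 → CSat c' ed.1 (ed.2.map ν)) :
    CSat c' X w := hX ▸ hw ▸ CSat.mk r hr ν hz hs hn

theorem csat_add (c : Code) (x y : ℕ) : CSat (gram c) addLab [x, y, x + y] := by
  induction y with
  | zero =>
    refine CSat.mk' (gram c) (addLab, 2, [(zeroLab, [1])], [0, 1, 0])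
      (by simp [gram, baseRules]) (fun n => if n = 0 then x else 0) addLab _
      rfl (by simp) ?_ ?_ ?_
    · intro ed hed h1
      simp only [List.mem_singleton] at hed
      subst hed
      simpa using zf_pos
    · intro ed hed h1
      simp only [List.mem_singleton] at hed
      subst hed
      exact absurd h1 (by decide)
    · intro ed hed h1
      simp only [List.mem_singleton] at hed
      subst hed
      exact absurd h1 (by simp [InterpFacts.not_mem_nts_zero (gram c) (wf_gram c)])
  | succ y ih =>
    refine CSat.mk' (gram c)
      (addLab, 5, [(succLab, [1, 3]), (succLab, [2, 4]), (addLab, [0, 1, 2])], [0, 3, 4])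
      (by simp [gram, baseRules])
      (fun n => if n = 0 then x else if n = 1 then y else if n = 2 then x + y
        else if n = 3 then y + 1 else x + y + 1) addLab _
      rfl (by simp; omega) ?_ ?_ ?_
    · intro ed hed h1
      simp only [List.mem_cons, List.not_mem_nil, or_false] at hed
      rcases hed with rfl | rfl | rfl <;> exact absurd h1 (by decide)
    · intro ed hed h1
      simp only [List.mem_cons, List.not_mem_nil, or_false] at hed
      rcases hed with rfl | rfl | rfl
      · simpa using sf_pos y
      · simpa using sf_pos (x + y)
      · exact absurd h1 (by decide)
    · intro ed hed h1
      simp only [List.mem_cons, List.not_mem_nil, or_false] at hed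
      rcases hed with rfl | rfl | rfl
      · exact absurd h1 (by simp [InterpFacts.not_mem_nts_succ (gram c) (wf_gram c)])
      · exact absurd h1 (by simp [InterpFacts.not_mem_nts_succ (gram c) (wf_gram c)])
      · simpa using ih

theorem csat_mul (c : Code) (x y : ℕ) : CSat (gram c) mulLab [x, y, x * y] := by
  induction y with
  | zero =>
    refine CSat.mk' (gram c) (mulLab, 2, [(zeroLab, [1])], [0, 1, 1])
      (by simp [gram, baseRules]) (fun n => if n = 0 then x else 0) mulLab _
      rfl (by simp) ?_ ?_ ?_
    · intro ed hed h1
      simp only [List.mem_singleton] at hed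
      subst hed
      simpa using zf_pos
    · intro ed hed h1
      simp only [List.mem_singleton] at hed
      subst hed
      exact absurd h1 (by decide)
    · intro ed hed h1
      simp only [List.mem_singleton] at hed
      subst hed
      exact absurd h1 (InterpFacts.not_mem_nts_zero (gram c) (wf_gram c))
  | succ y ih =>
    refine CSat.mk' (gram c)
      (mulLab, 5, [(succLab, [1, 3]), (mulLab, [0, 1, 2]), (addLab, [2, 0, 4])], [0, 3, 4])
      (by simp [gram, baseRules])
      (fun n => if n = 0 then x else if n = 1 then y else if n = 2 then x * y
        else if n = 3 then y + 1 else x * y + x) mulLab _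
      rfl (by simp; ring) ?_ ?_ ?_
    · intro ed hed h1
      simp only [List.mem_cons, List.not_mem_nil, or_false] at hed
      rcases hed with rfl | rfl | rfl <;> exact absurd h1 (by decide)
    · intro ed hed h1
      simp only [List.mem_cons, List.not_mem_nil, or_false] at hed
      rcases hed with rfl | rfl | rfl
      · simpa using sf_pos y
      · exact absurd h1 (by decide)
      · exact absurd h1 (by decide)
    · intro ed hed h1
      simp only [List.mem_cons, List.not_mem_nil, or_false] at hed
      rcases hed with rfl | rfl | rfl
      · exact absurd h1 (InterpFacts.not_mem_nts_succ (gram c) (wf_gram c))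
      · simpa using ih
      · simpa using csat_add c (x * y) x

theorem csat_le (c : Code) (x y : ℕ) (h : x ≤ y) : CSat (gram c) leLab [x, y] := by
  refine CSat.mk' (gram c) (leLab, 3, [(addLab, [0, 1, 2])], [0, 2])
    (by simp [gram, baseRules])
    (fun n => if n = 0 then x else if n = 1 then y - x else y) leLab _
    rfl (by simp) ?_ ?_ ?_
  · intro ed hed h1
    simp only [List.mem_singleton] at hed
    subst hed
    exact absurd h1 (by decide)
  · intro ed hed h1
    simp only [List.mem_singleton] at hed
    subst hed
    exact absurd h1 (by decide)
  · intro ed hed h1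
    simp only [List.mem_singleton] at hed
    subst hed
    have h2 := csat_add c x (y - x)
    rw [show x + (y - x) = y from by omega] at h2
    simpa using h2

theorem csat_lt (c : Code) (x y : ℕ) (h : x < y) : CSat (gram c) ltLab [x, y] := by
  refine CSat.mk' (gram c) (ltLab, 3, [(succLab, [0, 1]), (leLab, [1, 2])], [0, 2])
    (by simp [gram, baseRules])
    (fun n => if n = 0 then x else if n = 1 then x + 1 else y) ltLab _
    rfl (by simp) ?_ ?_ ?_
  · intro ed hed h1
    simp only [List.mem_cons, List.not_mem_nil, or_false] at hed
    rcases hed with rfl | rfl <;> exact absurd h1 (by decide)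
  · intro ed hed h1
    simp only [List.mem_cons, List.not_mem_nil, or_false] at hed
    rcases hed with rfl | rfl
    · simpa using sf_pos x
    · exact absurd h1 (by decide)
  · intro ed hed h1
    simp only [List.mem_cons, List.not_mem_nil, or_false] at hed
    rcases hed with rfl | rfl
    · exact absurd h1 (InterpFacts.not_mem_nts_succ (gram c) (wf_gram c))
    · simpa using csat_le c (x + 1) y h

theorem csat_pair (c : Code) (x y : ℕ) : CSat (gram c) pairLab [x, y, Nat.pair x y] := by
  rcases lt_or_ge x y with h | h
  · refine CSat.mk' (gram c)
      (pairLab, 4, [(ltLab, [0, 1]), (mulLab, [1, 1, 2]), (addLab, [2, 0, 3])], [0, 1, 3])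
      (by simp [gram, baseRules])
      (fun n => if n = 0 then x else if n = 1 then y else if n = 2 then y * y
        else y * y + x) pairLab _
      rfl (by simp; rw [Nat.pair, if_pos h]) ?_ ?_ ?_
    · intro ed hed h1
      simp only [List.mem_cons, List.not_mem_nil, or_false] at hed
      rcases hed with rfl | rfl | rfl <;> exact absurd h1 (by decide)
    · intro ed hed h1
      simp only [List.mem_cons, List.not_mem_nil, or_false] at hed
      rcases hed with rfl | rfl | rfl <;> exact absurd h1 (by decide)
    · intro ed hed h1
      simp only [List.mem_cons, List.not_mem_nil, or_false] at hed
      rcases hed with rfl | rfl | rfl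
      · simpa using csat_lt c x y h
      · simpa using csat_mul c y y
      · simpa using csat_add c (y * y) x
  · refine CSat.mk' (gram c)
      (pairLab, 5, [(leLab, [1, 0]), (mulLab, [0, 0, 2]), (addLab, [2, 0, 3]),
        (addLab, [3, 1, 4])], [0, 1, 4])
      (by simp [gram, baseRules])
      (fun n => if n = 0 then x else if n = 1 then y else if n = 2 then x * x
        else if n = 3 then x * x + x else x * x + x + y) pairLab _
      rfl (by simp; rw [Nat.pair, if_neg (by omega)]) ?_ ?_ ?_
    · intro ed hed h1
      simp only [List.mem_cons, List.not_mem_nil, or_false] at hed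
      rcases hed with rfl | rfl | rfl | rfl <;> exact absurd h1 (by decide)
    · intro ed hed h1
      simp only [List.mem_cons, List.not_mem_nil, or_false] at hed
      rcases hed with rfl | rfl | rfl | rfl <;> exact absurd h1 (by decide)
    · intro ed hed h1
      simp only [List.mem_cons, List.not_mem_nil, or_false] at hed
      rcases hed with rfl | rfl | rfl | rfl
      · simpa using csat_le c y x h
      · simpa using csat_mul c x x
      · simpa using csat_add c (x * x) x
      · simpa using csat_add c (x * x + x) y

theorem codeRule_mem {c d : Code} (hd : d ∈ subcodes c) {r : RuleCode}
    (hr : r ∈ codeRules d) : r ∈ (gram c).2.1 :=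
  List.mem_append_right _ (List.mem_flatMap.mpr ⟨d, hd, hr⟩)

theorem mem_eval_zero {x y : ℕ} : y ∈ eval Code.zero x ↔ y = 0 := Part.mem_some_iff

theorem mem_eval_succ {x y : ℕ} : y ∈ eval Code.succ x ↔ y = x + 1 := Part.mem_some_iff

theorem mem_eval_left {x y : ℕ} : y ∈ eval Code.left x ↔ y = x.unpair.1 :=
  Part.mem_some_iff

theorem mem_eval_right {x y : ℕ} : y ∈ eval Code.right x ↔ y = x.unpair.2 :=
  Part.mem_some_iff

theorem mem_eval_pair {f g : Code} {x y : ℕ} :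
    y ∈ eval (Code.pair f g) x ↔ ∃ a ∈ eval f x, ∃ b ∈ eval g x, Nat.pair a b = y := by
  show y ∈ Part.bind (Part.map Nat.pair (eval f x)) (fun q => Part.map q (eval g x)) ↔ _
  rw [Part.mem_bind_iff]
  constructor
  · rintro ⟨q, hq, hy⟩
    rw [Part.mem_map_iff] at hq
    obtain ⟨a, ha, rfl⟩ := hq
    rw [Part.mem_map_iff] at hy
    obtain ⟨b, hb, rfl⟩ := hy
    exact ⟨a, ha, b, hb, rfl⟩
  · rintro ⟨a, ha, b, hb, rfl⟩
    exact ⟨Nat.pair a, Part.mem_map_iff _ |>.mpr ⟨a, ha, rfl⟩,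
      Part.mem_map_iff _ |>.mpr ⟨b, hb, rfl⟩⟩

theorem mem_eval_comp {f g : Code} {x y : ℕ} :
    y ∈ eval (Code.comp f g) x ↔ ∃ u ∈ eval g x, y ∈ eval f u := by
  show y ∈ Part.bind (eval g x) (eval f) ↔ _
  exact Part.mem_bind_iff

theorem csat_eval (c : Code) : ∀ d : Code, d ∈ subcodes c →
    ∀ x y : ℕ, y ∈ eval d x → CSat (gram c) (eLab d) [x, y] := by
  intro d
  induction d with
  | zero =>
    intro hd x y hy
    rw [mem_eval_zero] at hy
    subst hy
    refine CSat.mk' (gram c) (eLab Code.zero, 2, [(zeroLab, [1])], [0, 1])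
      (codeRule_mem hd (by simp [codeRules]))
      (fun n => if n = 0 then x else 0) (eLab Code.zero) _ rfl (by simp) ?_ ?_ ?_
    · intro ed hed h1
      simp only [List.mem_singleton] at hed
      subst hed
      simpa using zf_pos
    · intro ed hed h1
      simp only [List.mem_singleton] at hed
      subst hed
      exact absurd h1 (by decide)
    · intro ed hed h1
      simp only [List.mem_singleton] at hed
      subst hed
      exact absurd h1 (InterpFacts.not_mem_nts_zero (gram c) (wf_gram c))
  | succ =>
    intro hd x y hy
    rw [mem_eval_succ] at hy
    subst hy
    refine CSat.mk' (gram c) (eLab Code.succ, 2, [(succLab, [0, 1])], [0, 1])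
      (codeRule_mem hd (by simp [codeRules]))
      (fun n => if n = 0 then x else x + 1) (eLab Code.succ) _ rfl (by simp) ?_ ?_ ?_
    · intro ed hed h1
      simp only [List.mem_singleton] at hed
      subst hed
      exact absurd h1 (by decide)
    · intro ed hed h1
      simp only [List.mem_singleton] at hed
      subst hed
      simpa using sf_pos x
    · intro ed hed h1
      simp only [List.mem_singleton] at hed
      subst hed
      exact absurd h1 (InterpFacts.not_mem_nts_succ (gram c) (wf_gram c))
  | left =>
    intro hd x y hy
    rw [mem_eval_left] at hy
    subst hy
    refine CSat.mk' (gram c) (eLab Code.left, 3, [(pairLab, [1, 2, 0])], [0, 1])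
      (codeRule_mem hd (by simp [codeRules]))
      (fun n => if n = 0 then x else if n = 1 then x.unpair.1 else x.unpair.2)
      (eLab Code.left) _ rfl (by simp) ?_ ?_ ?_
    · intro ed hed h1
      simp only [List.mem_singleton] at hed
      subst hed
      exact absurd h1 (by decide)
    · intro ed hed h1
      simp only [List.mem_singleton] at hed
      subst hed
      exact absurd h1 (by decide)
    · intro ed hed h1
      simp only [List.mem_singleton] at hed
      subst hed
      have h2 := csat_pair c x.unpair.1 x.unpair.2
      rw [Nat.pair_unpair] at h2
      simpa using h2
  | right =>
    intro hd x y hy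
    rw [mem_eval_right] at hy
    subst hy
    refine CSat.mk' (gram c) (eLab Code.right, 3, [(pairLab, [2, 1, 0])], [0, 1])
      (codeRule_mem hd (by simp [codeRules]))
      (fun n => if n = 0 then x else if n = 1 then x.unpair.2 else x.unpair.1)
      (eLab Code.right) _ rfl (by simp) ?_ ?_ ?_
    · intro ed hed h1
      simp only [List.mem_singleton] at hed
      subst hed
      exact absurd h1 (by decide)
    · intro ed hed h1
      simp only [List.mem_singleton] at hed
      subst hed
      exact absurd h1 (by decide)
    · intro ed hed h1
      simp only [List.mem_singleton] at hed
      subst hed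
      have h2 := csat_pair c x.unpair.1 x.unpair.2
      rw [Nat.pair_unpair] at h2
      simpa using h2
  | pair f g ihf ihg =>
    intro hd x y hy
    have hf := subcodes_sub hd (mem_subcodes_pair_left f g)
    have hg := subcodes_sub hd (mem_subcodes_pair_right f g)
    rw [mem_eval_pair] at hy
    obtain ⟨a, ha, b, hb, rfl⟩ := hy
    refine CSat.mk' (gram c) (eLab (Code.pair f g), 4,
      [(eLab f, [0, 1]), (eLab g, [0, 2]), (pairLab, [1, 2, 3])], [0, 3])
      (codeRule_mem hd (by simp [codeRules]))
      (fun n => if n = 0 then x else if n = 1 then a else if n = 2 then b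
        else Nat.pair a b) (eLab (Code.pair f g)) _ rfl (by simp) ?_ ?_ ?_
    · intro ed hed h1
      simp only [List.mem_cons, List.not_mem_nil, or_false] at hed
      rcases hed with rfl | rfl | rfl
      · exact absurd h1 (by simp [eLab, zeroLab, Prod.ext_iff])
      · exact absurd h1 (by simp [eLab, zeroLab, Prod.ext_iff])
      · exact absurd h1 (by decide)
    · intro ed hed h1
      simp only [List.mem_cons, List.not_mem_nil, or_false] at hed
      rcases hed with rfl | rfl | rfl
      · refine absurd h1 ?_
        simp only [eLab, succLab, Prod.ext_iff]
        simp
        omega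
      · refine absurd h1 ?_
        simp only [eLab, succLab, Prod.ext_iff]
        simp
        omega
      · exact absurd h1 (by decide)
    · intro ed hed h1
      simp only [List.mem_cons, List.not_mem_nil, or_false] at hed
      rcases hed with rfl | rfl | rfl
      · simpa using ihf hf x a ha
      · simpa using ihg hg x b hb
      · simpa using csat_pair c a b
  | comp f g ihf ihg =>
    intro hd x y hy
    have hf := subcodes_sub hd (mem_subcodes_comp_left f g)
    have hg := subcodes_sub hd (mem_subcodes_comp_right f g)
    rw [mem_eval_comp] at hy
    obtain ⟨u, hu, hy⟩ := hy
    refine CSat.mk' (gram c) (eLab (Code.comp f g), 3,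
      [(eLab g, [0, 1]), (eLab f, [1, 2])], [0, 2])
      (codeRule_mem hd (by simp [codeRules]))
      (fun n => if n = 0 then x else if n = 1 then u else y)
      (eLab (Code.comp f g)) _ rfl (by simp) ?_ ?_ ?_
    · intro ed hed h1
      simp only [List.mem_cons, List.not_mem_nil, or_false] at hed
      rcases hed with rfl | rfl <;>
        exact absurd h1 (by simp [eLab, zeroLab, Prod.ext_iff])
    · intro ed hed h1
      simp only [List.mem_cons, List.not_mem_nil, or_false] at hed
      rcases hed with rfl | rfl <;>
        (refine absurd h1 ?_; simp only [eLab, succLab, Prod.ext_iff]; simp; omega)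
    · intro ed hed h1
      simp only [List.mem_cons, List.not_mem_nil, or_false] at hed
      rcases hed with rfl | rfl
      · simpa using ihg hg x u hu
      · simpa using ihf hf u y hy
  | prec f g ihf ihg =>
    intro hd x y hy
    have hf := subcodes_sub hd (mem_subcodes_prec_left f g)
    have hg := subcodes_sub hd (mem_subcodes_prec_right f g)
    have aux : ∀ (i a z : ℕ), z ∈ precSem f g a i →
        CSat (gram c) (auxLab (Code.prec f g)) [a, i, z] := by
      intro i
      induction i with
      | zero =>
        intro a z hz
        rw [precSem_zero] at hz
        refine CSat.mk' (gram c) (auxLab (Code.prec f g), 3,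
          [(zeroLab, [1]), (eLab f, [0, 2])], [0, 1, 2])
          (codeRule_mem hd (by simp [codeRules]))
          (fun n => if n = 0 then a else if n = 1 then 0 else z)
          (auxLab (Code.prec f g)) _ rfl (by simp) ?_ ?_ ?_
        · intro ed hed h1
          simp only [List.mem_cons, List.not_mem_nil, or_false] at hed
          rcases hed with rfl | rfl
          · simpa using zf_pos
          · exact absurd h1 (by simp [eLab, zeroLab, Prod.ext_iff])
        · intro ed hed h1
          simp only [List.mem_cons, List.not_mem_nil, or_false] at hed
          rcases hed with rfl | rfl
          · exact absurd h1 (by decide)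
          · refine absurd h1 ?_
            simp only [eLab, succLab, Prod.ext_iff]
            simp
            omega
        · intro ed hed h1
          simp only [List.mem_cons, List.not_mem_nil, or_false] at hed
          rcases hed with rfl | rfl
          · exact absurd h1 (InterpFacts.not_mem_nts_zero (gram c) (wf_gram c))
          · simpa using ihf hf a z hz
      | succ i ihi =>
        intro a z hz
        rw [precSem_succ, Part.mem_bind_iff] at hz
        obtain ⟨u, hu, hz2⟩ := hz
        refine CSat.mk' (gram c) (auxLab (Code.prec f g), 7,
          [(succLab, [1, 6]), (auxLab (Code.prec f g), [0, 1, 2]), (pairLab, [1, 2, 3]),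
            (pairLab, [0, 3, 4]), (eLab g, [4, 5])], [0, 6, 5])
          (codeRule_mem hd (by simp [codeRules]))
          (fun n => if n = 0 then a else if n = 1 then i else if n = 2 then u
            else if n = 3 then Nat.pair i u else if n = 4 then Nat.pair a (Nat.pair i u)
            else if n = 5 then z else i + 1)
          (auxLab (Code.prec f g)) _ rfl (by simp) ?_ ?_ ?_
        · intro ed hed h1
          simp only [List.mem_cons, List.not_mem_nil, or_false] at hed
          rcases hed with rfl | rfl | rfl | rfl | rfl
          · exact absurd h1 (by decide)
          · exact absurd h1 (by simp [auxLab, zeroLab, Prod.ext_iff])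
          · exact absurd h1 (by decide)
          · exact absurd h1 (by decide)
          · exact absurd h1 (by simp [eLab, zeroLab, Prod.ext_iff])
        · intro ed hed h1
          simp only [List.mem_cons, List.not_mem_nil, or_false] at hed
          rcases hed with rfl | rfl | rfl | rfl | rfl
          · simpa using sf_pos i
          · exact absurd h1 (by simp [auxLab, succLab, Prod.ext_iff])
          · exact absurd h1 (by decide)
          · exact absurd h1 (by decide)
          · refine absurd h1 ?_
            simp only [eLab, succLab, Prod.ext_iff]
            simp
            omega
        · intro ed hed h1
          simp only [List.mem_cons, List.not_mem_nil, or_false] at hed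
          rcases hed with rfl | rfl | rfl | rfl | rfl
          · exact absurd h1 (InterpFacts.not_mem_nts_succ (gram c) (wf_gram c))
          · simpa using ihi a u hu
          · simpa using csat_pair c i u
          · simpa using csat_pair c a (Nat.pair i u)
          · simpa using ihg hg (Nat.pair a (Nat.pair i u)) z hz2
    have hx : Nat.pair x.unpair.1 x.unpair.2 = x := Nat.pair_unpair x
    rw [← hx, eval_prec_eq] at hy
    have hc := aux x.unpair.2 x.unpair.1 y hy
    refine CSat.mk' (gram c) (eLab (Code.prec f g), 4,
      [(pairLab, [1, 2, 0]), (auxLab (Code.prec f g), [1, 2, 3])], [0, 3])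
      (codeRule_mem hd (by simp [codeRules]))
      (fun n => if n = 0 then x else if n = 1 then x.unpair.1
        else if n = 2 then x.unpair.2 else y)
      (eLab (Code.prec f g)) _ rfl (by simp) ?_ ?_ ?_
    · intro ed hed h1
      simp only [List.mem_cons, List.not_mem_nil, or_false] at hed
      rcases hed with rfl | rfl
      · exact absurd h1 (by decide)
      · exact absurd h1 (by simp [auxLab, zeroLab, Prod.ext_iff])
    · intro ed hed h1
      simp only [List.mem_cons, List.not_mem_nil, or_false] at hed
      rcases hed with rfl | rfl
      · exact absurd h1 (by decide)
      · exact absurd h1 (by simp [auxLab, succLab, Prod.ext_iff])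
    · intro ed hed h1
      simp only [List.mem_cons, List.not_mem_nil, or_false] at hed
      rcases hed with rfl | rfl
      · have h2 := csat_pair c x.unpair.1 x.unpair.2
        rw [hx] at h2
        simpa using h2
      · simpa using hc
  | rfind' f ihf =>
    intro hd x y hy
    have hf := subcodes_sub hd (mem_subcodes_rfind f)
    have aux : ∀ (n a m : ℕ), 0 ∈ eval f (Nat.pair a (n + m)) →
        (∀ k < n, ∃ z, z ∈ eval f (Nat.pair a (k + m)) ∧ z ≠ 0) →
        CSat (gram c) (auxLab (Code.rfind' f)) [a, m, n + m] := by
      intro n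
      induction n with
      | zero =>
        intro a m h1 h2
        rw [Nat.zero_add] at h1
        rw [Nat.zero_add]
        refine CSat.mk' (gram c) (auxLab (Code.rfind' f), 4,
          [(pairLab, [0, 1, 2]), (eLab f, [2, 3]), (zeroLab, [3])], [0, 1, 1])
          (codeRule_mem hd (by simp [codeRules]))
          (fun n => if n = 0 then a else if n = 1 then m
            else if n = 2 then Nat.pair a m else 0)
          (auxLab (Code.rfind' f)) _ rfl (by simp) ?_ ?_ ?_
        · intro ed hed h3
          simp only [List.mem_cons, List.not_mem_nil, or_false] at hed
          rcases hed with rfl | rfl | rfl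
          · exact absurd h3 (by decide)
          · exact absurd h3 (by simp [eLab, zeroLab, Prod.ext_iff])
          · simpa using zf_pos
        · intro ed hed h3
          simp only [List.mem_cons, List.not_mem_nil, or_false] at hed
          rcases hed with rfl | rfl | rfl
          · exact absurd h3 (by decide)
          · refine absurd h3 ?_
            simp only [eLab, succLab, Prod.ext_iff]
            simp
            omega
          · exact absurd h3 (by decide)
        · intro ed hed h3
          simp only [List.mem_cons, List.not_mem_nil, or_false] at hed
          rcases hed with rfl | rfl | rfl
          · simpa using csat_pair c a m
          · simpa using ihf hf (Nat.pair a m) 0 h1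
          · exact absurd h3 (InterpFacts.not_mem_nts_zero (gram c) (wf_gram c))
      | succ n ihn =>
        intro a m h1 h2
        obtain ⟨z, hz1, hz0⟩ := h2 0 (by omega)
        rw [Nat.zero_add] at hz1
        obtain ⟨u, rfl⟩ : ∃ u, z = u + 1 := ⟨z - 1, by omega⟩
        have hrec : CSat (gram c) (auxLab (Code.rfind' f)) [a, m + 1, n + (m + 1)] := by
          refine ihn a (m + 1) ?_ ?_
          · rw [show n + (m + 1) = n + 1 + m from by omega]
            exact h1
          · intro k hk
            obtain ⟨z', hz', hz0'⟩ := h2 (k + 1) (by omega)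
            refine ⟨z', ?_, hz0'⟩
            rwa [show k + (m + 1) = k + 1 + m from by omega]
        rw [show n + (m + 1) = n + 1 + m from by omega] at hrec
        refine CSat.mk' (gram c) (auxLab (Code.rfind' f), 7,
          [(pairLab, [0, 1, 2]), (eLab f, [2, 3]), (succLab, [4, 3]), (succLab, [1, 5]),
            (auxLab (Code.rfind' f), [0, 5, 6])], [0, 1, 6])
          (codeRule_mem hd (by simp [codeRules]))
          (fun k => if k = 0 then a else if k = 1 then m
            else if k = 2 then Nat.pair a m else if k = 3 then u + 1
            else if k = 4 then u else if k = 5 then m + 1 else n + 1 + m)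
          (auxLab (Code.rfind' f)) _ rfl (by simp) ?_ ?_ ?_
        · intro ed hed h3
          simp only [List.mem_cons, List.not_mem_nil, or_false] at hed
          rcases hed with rfl | rfl | rfl | rfl | rfl
          · exact absurd h3 (by decide)
          · exact absurd h3 (by simp [eLab, zeroLab, Prod.ext_iff])
          · exact absurd h3 (by decide)
          · exact absurd h3 (by decide)
          · exact absurd h3 (by simp [auxLab, zeroLab, Prod.ext_iff])
        · intro ed hed h3
          simp only [List.mem_cons, List.not_mem_nil, or_false] at hed
          rcases hed with rfl | rfl | rfl | rfl | rfl
          · exact absurd h3 (by decide)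
          · refine absurd h3 ?_
            simp only [eLab, succLab, Prod.ext_iff]
            simp
            omega
          · simpa using sf_pos u
          · simpa using sf_pos m
          · exact absurd h3 (by simp [auxLab, succLab, Prod.ext_iff])
        · intro ed hed h3
          simp only [List.mem_cons, List.not_mem_nil, or_false] at hed
          rcases hed with rfl | rfl | rfl | rfl | rfl
          · simpa using csat_pair c a m
          · simpa using ihf hf (Nat.pair a m) (u + 1) hz1
          · exact absurd h3 (InterpFacts.not_mem_nts_succ (gram c) (wf_gram c))
          · exact absurd h3 (InterpFacts.not_mem_nts_succ (gram c) (wf_gram c))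
          · simpa using hrec
    have hx : Nat.pair x.unpair.1 x.unpair.2 = x := Nat.pair_unpair x
    rw [← hx, mem_eval_rfind] at hy
    obtain ⟨n, rfl, h1, h2⟩ := hy
    have hc := aux n x.unpair.1 x.unpair.2 h1 h2
    refine CSat.mk' (gram c) (eLab (Code.rfind' f), 4,
      [(pairLab, [1, 2, 0]), (auxLab (Code.rfind' f), [1, 2, 3])], [0, 3])
      (codeRule_mem hd (by simp [codeRules]))
      (fun k => if k = 0 then x else if k = 1 then x.unpair.1
        else if k = 2 then x.unpair.2 else n + x.unpair.2)
      (eLab (Code.rfind' f)) _ rfl (by simp) ?_ ?_ ?_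
    · intro ed hed h3
      simp only [List.mem_cons, List.not_mem_nil, or_false] at hed
      rcases hed with rfl | rfl
      · exact absurd h3 (by decide)
      · exact absurd h3 (by simp [auxLab, zeroLab, Prod.ext_iff])
    · intro ed hed h3
      simp only [List.mem_cons, List.not_mem_nil, or_false] at hed
      rcases hed with rfl | rfl
      · exact absurd h3 (by decide)
      · exact absurd h3 (by simp [auxLab, succLab, Prod.ext_iff])
    · intro ed hed h3
      simp only [List.mem_cons, List.not_mem_nil, or_false] at hed
      rcases hed with rfl | rfl
      · have h4 := csat_pair c x.unpair.1 x.unpair.2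
        rw [hx] at h4
        simpa using h4
      · simpa using hc

theorem csat_start (c : Code) (h : ∃ y, y ∈ eval c 0) :
    CSat (gram c) startLab [] := by
  obtain ⟨y, hy⟩ := h
  refine CSat.mk' (gram c) (startRule c) (by simp [gram])
    (fun n => if n = 0 then 0 else y) startLab _ rfl (by simp [startRule]) ?_ ?_ ?_
  · intro ed hed h1
    simp only [startRule, List.mem_cons, List.not_mem_nil, or_false] at hed
    rcases hed with rfl | rfl
    · simpa using zf_pos
    · exact absurd h1 (by simp [eLab, zeroLab, Prod.ext_iff])
  · intro ed hed h1
    simp only [startRule, List.mem_cons, List.not_mem_nil, or_false] at hed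
    rcases hed with rfl | rfl
    · exact absurd h1 (by decide)
    · refine absurd h1 ?_
      simp only [eLab, succLab, Prod.ext_iff]
      simp
      omega
  · intro ed hed h1
    simp only [startRule, List.mem_cons, List.not_mem_nil, or_false] at hed
    rcases hed with rfl | rfl
    · exact absurd h1 (InterpFacts.not_mem_nts_zero (gram c) (wf_gram c))
    · simpa using csat_eval c c (self_mem_subcodes c) 0 y hy

theorem csat_start_iff (c : Code) :
    CSat (gram c) startLab [] ↔ (eval c 0).Dom := by
  constructor
  · intro h
    obtain ⟨-, y, hy⟩ := denote_start_inv (csat_sound c h)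
    exact Part.dom_iff_mem.mpr ⟨y, hy⟩
  · intro h
    exact csat_start c (Part.dom_iff_mem.mp h)

open scoped ENNReal Classical
open Nat.Partrec (Code)
open Nat.Partrec.Code (eval primrec₂_pair primrec₂_comp primrec₂_prec primrec_rfind')

theorem eLab_primrec : Primrec eLab :=
  Primrec.pair
    (Primrec.nat_add.comp (Primrec.const 8)
      (Primrec.nat_mul.comp (Primrec.const 2) Primrec.encode))
    (Primrec.const 2)

theorem auxLab_primrec : Primrec auxLab :=
  Primrec.pair
    (Primrec.nat_add.comp (Primrec.const 9)
      (Primrec.nat_mul.comp (Primrec.const 2) Primrec.encode))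
    (Primrec.const 3)

theorem subcodes_primrec : Primrec subcodes := by
  have h := Nat.Partrec.Code.primrec_recOn (α := Code) (σ := List Code)
    (c := fun d => d) Primrec.id
    (z := fun _ => [Code.zero]) (Primrec.const _)
    (s := fun _ => [Code.succ]) (Primrec.const _)
    (l := fun _ => [Code.left]) (Primrec.const _)
    (r := fun _ => [Code.right]) (Primrec.const _)
    (pr := fun _ cf cg hf hg => Code.pair cf cg :: (hf ++ hg))
    (Primrec.list_cons.comp
      (primrec₂_pair.comp (Primrec.fst.comp Primrec.snd)
        (Primrec.fst.comp (Primrec.snd.comp Primrec.snd)))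
      (Primrec.list_append.comp
        (Primrec.fst.comp (Primrec.snd.comp (Primrec.snd.comp Primrec.snd)))
        (Primrec.snd.comp (Primrec.snd.comp (Primrec.snd.comp Primrec.snd)))))
    (co := fun _ cf cg hf hg => Code.comp cf cg :: (hf ++ hg))
    (Primrec.list_cons.comp
      (primrec₂_comp.comp (Primrec.fst.comp Primrec.snd)
        (Primrec.fst.comp (Primrec.snd.comp Primrec.snd)))
      (Primrec.list_append.comp
        (Primrec.fst.comp (Primrec.snd.comp (Primrec.snd.comp Primrec.snd)))
        (Primrec.snd.comp (Primrec.snd.comp (Primrec.snd.comp Primrec.snd)))))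
    (pc := fun _ cf cg hf hg => Code.prec cf cg :: (hf ++ hg))
    (Primrec.list_cons.comp
      (primrec₂_prec.comp (Primrec.fst.comp Primrec.snd)
        (Primrec.fst.comp (Primrec.snd.comp Primrec.snd)))
      (Primrec.list_append.comp
        (Primrec.fst.comp (Primrec.snd.comp (Primrec.snd.comp Primrec.snd)))
        (Primrec.snd.comp (Primrec.snd.comp (Primrec.snd.comp Primrec.snd)))))
    (rf := fun _ cf hf => Code.rfind' cf :: hf)
    (Primrec.list_cons.comp
      (primrec_rfind'.comp (Primrec.fst.comp Primrec.snd))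
      (Primrec.snd.comp Primrec.snd))
  exact h.of_eq (fun d => by induction d <;> simp [subcodes, *])

theorem pairRules_primrec :
    Primrec₂ (fun f g : Code => codeRules (Code.pair f g)) := by
  show Primrec fun p : Code × Code => codeRules (Code.pair p.1 p.2)
  have he1 : Primrec fun p : Code × Code => eLab p.1 := eLab_primrec.comp Primrec.fst
  have he2 : Primrec fun p : Code × Code => eLab p.2 := eLab_primrec.comp Primrec.snd
  have he12 : Primrec fun p : Code × Code => eLab (Code.pair p.1 p.2) :=
    eLab_primrec.comp (primrec₂_pair.comp Primrec.fst Primrec.snd)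
  exact Primrec.list_cons.comp
    (he12.pair ((Primrec.const 4).pair
      ((Primrec.list_cons.comp (he1.pair (Primrec.const [0, 1]))
        (Primrec.list_cons.comp (he2.pair (Primrec.const [0, 2]))
          (Primrec.const [(pairLab, [1, 2, 3])]))).pair
        (Primrec.const [0, 3]))))
    (Primrec.const [])

theorem compRules_primrec :
    Primrec₂ (fun f g : Code => codeRules (Code.comp f g)) := by
  show Primrec fun p : Code × Code => codeRules (Code.comp p.1 p.2)
  have he1 : Primrec fun p : Code × Code => eLab p.1 := eLab_primrec.comp Primrec.fst
  have he2 : Primrec fun p : Code × Code => eLab p.2 := eLab_primrec.comp Primrec.snd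
  have he12 : Primrec fun p : Code × Code => eLab (Code.comp p.1 p.2) :=
    eLab_primrec.comp (primrec₂_comp.comp Primrec.fst Primrec.snd)
  exact Primrec.list_cons.comp
    (he12.pair ((Primrec.const 3).pair
      ((Primrec.list_cons.comp (he2.pair (Primrec.const [0, 1]))
        (Primrec.list_cons.comp (he1.pair (Primrec.const [1, 2]))
          (Primrec.const []))).pair
        (Primrec.const [0, 2]))))
    (Primrec.const [])

theorem precRules_primrec :
    Primrec₂ (fun f g : Code => codeRules (Code.prec f g)) := by
  show Primrec fun p : Code × Code => codeRules (Code.prec p.1 p.2)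
  have he1 : Primrec fun p : Code × Code => eLab p.1 := eLab_primrec.comp Primrec.fst
  have he2 : Primrec fun p : Code × Code => eLab p.2 := eLab_primrec.comp Primrec.snd
  have hpp : Primrec fun p : Code × Code => Code.prec p.1 p.2 :=
    primrec₂_prec.comp Primrec.fst Primrec.snd
  have he12 : Primrec fun p : Code × Code => eLab (Code.prec p.1 p.2) :=
    eLab_primrec.comp hpp
  have ha12 : Primrec fun p : Code × Code => auxLab (Code.prec p.1 p.2) :=
    auxLab_primrec.comp hpp
  refine Primrec.list_cons.comp
    (he12.pair ((Primrec.const 4).pair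
      ((Primrec.list_cons.comp (Primrec.const (pairLab, [1, 2, 0]))
        (Primrec.list_cons.comp (ha12.pair (Primrec.const [1, 2, 3]))
          (Primrec.const []))).pair
        (Primrec.const [0, 3]))))
    (Primrec.list_cons.comp
      (ha12.pair ((Primrec.const 3).pair
        ((Primrec.list_cons.comp (Primrec.const (zeroLab, [1]))
          (Primrec.list_cons.comp (he1.pair (Primrec.const [0, 2]))
            (Primrec.const []))).pair
          (Primrec.const [0, 1, 2]))))
      (Primrec.list_cons.comp
        (ha12.pair ((Primrec.const 7).pair
          ((Primrec.list_cons.comp (Primrec.const (succLab, [1, 6]))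
            (Primrec.list_cons.comp (ha12.pair (Primrec.const [0, 1, 2]))
              (Primrec.list_cons.comp (Primrec.const (pairLab, [1, 2, 3]))
                (Primrec.list_cons.comp (Primrec.const (pairLab, [0, 3, 4]))
                  (Primrec.list_cons.comp (he2.pair (Primrec.const [4, 5]))
                    (Primrec.const [])))))).pair
            (Primrec.const [0, 6, 5]))))
        (Primrec.const [])))

theorem rfindRules_primrec :
    Primrec (fun f : Code => codeRules (Code.rfind' f)) := by
  have he1 : Primrec fun f : Code => eLab f := eLab_primrec
  have hpp : Primrec fun f : Code => Code.rfind' f := primrec_rfind'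
  have he12 : Primrec fun f : Code => eLab (Code.rfind' f) := eLab_primrec.comp hpp
  have ha12 : Primrec fun f : Code => auxLab (Code.rfind' f) := auxLab_primrec.comp hpp
  refine Primrec.list_cons.comp
    (he12.pair ((Primrec.const 4).pair
      ((Primrec.list_cons.comp (Primrec.const (pairLab, [1, 2, 0]))
        (Primrec.list_cons.comp (ha12.pair (Primrec.const [1, 2, 3]))
          (Primrec.const []))).pair
        (Primrec.const [0, 3]))))
    (Primrec.list_cons.comp
      (ha12.pair ((Primrec.const 4).pair
        ((Primrec.list_cons.comp (Primrec.const (pairLab, [0, 1, 2]))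
          (Primrec.list_cons.comp (he1.pair (Primrec.const [2, 3]))
            (Primrec.list_cons.comp (Primrec.const (zeroLab, [3]))
              (Primrec.const [])))).pair
          (Primrec.const [0, 1, 1]))))
      (Primrec.list_cons.comp
        (ha12.pair ((Primrec.const 7).pair
          ((Primrec.list_cons.comp (Primrec.const (pairLab, [0, 1, 2]))
            (Primrec.list_cons.comp (he1.pair (Primrec.const [2, 3]))
              (Primrec.list_cons.comp (Primrec.const (succLab, [4, 3]))
                (Primrec.list_cons.comp (Primrec.const (succLab, [1, 5]))
                  (Primrec.list_cons.comp (ha12.pair (Primrec.const [0, 5, 6]))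
                    (Primrec.const [])))))).pair
            (Primrec.const [0, 1, 6]))))
        (Primrec.const [])))

theorem codeRules_primrec : Primrec codeRules := by
  have h := Nat.Partrec.Code.primrec_recOn (α := Code) (σ := List RuleCode)
    (c := fun d => d) Primrec.id
    (z := fun _ => codeRules Code.zero) (Primrec.const _)
    (s := fun _ => codeRules Code.succ) (Primrec.const _)
    (l := fun _ => codeRules Code.left) (Primrec.const _)
    (r := fun _ => codeRules Code.right) (Primrec.const _)
    (pr := fun _ cf cg _ _ => codeRules (Code.pair cf cg))
    (pairRules_primrec.comp (Primrec.fst.comp Primrec.snd)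
      (Primrec.fst.comp (Primrec.snd.comp Primrec.snd)))
    (co := fun _ cf cg _ _ => codeRules (Code.comp cf cg))
    (compRules_primrec.comp (Primrec.fst.comp Primrec.snd)
      (Primrec.fst.comp (Primrec.snd.comp Primrec.snd)))
    (pc := fun _ cf cg _ _ => codeRules (Code.prec cf cg))
    (precRules_primrec.comp (Primrec.fst.comp Primrec.snd)
      (Primrec.fst.comp (Primrec.snd.comp Primrec.snd)))
    (rf := fun _ cf _ => codeRules (Code.rfind' cf))
    (rfindRules_primrec.comp (Primrec.fst.comp Primrec.snd))
  exact h.of_eq (fun d => by cases d <;> rfl)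

theorem ntsOf_primrec : Primrec ntsOf := by
  have hg : Primrec₂ fun (_ : Code) (e : Code) => [eLab e, auxLab e] := by
    show Primrec fun p : Code × Code => [eLab p.2, auxLab p.2]
    exact Primrec.list_cons.comp (eLab_primrec.comp Primrec.snd)
      (Primrec.list_cons.comp (auxLab_primrec.comp Primrec.snd) (Primrec.const []))
  exact Primrec.list_append.comp
    (Primrec.const [startLab, addLab, mulLab, leLab, ltLab, pairLab])
    (Primrec.list_flatMap subcodes_primrec hg)

theorem startRule_primrec : Primrec startRule := by
  exact (Primrec.const startLab).pair ((Primrec.const 2).pair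
    ((Primrec.list_cons.comp (Primrec.const (zeroLab, [0]))
      (Primrec.list_cons.comp (eLab_primrec.pair (Primrec.const [0, 1]))
        (Primrec.const []))).pair
      (Primrec.const ([] : List ℕ))))

theorem gram_primrec : Primrec gram := by
  have hrules : Primrec fun d : Code =>
      (startRule d :: baseRules) ++ (subcodes d).flatMap codeRules := by
    refine Primrec.list_append.comp
      (Primrec.list_cons.comp startRule_primrec (Primrec.const baseRules)) ?_
    exact Primrec.list_flatMap subcodes_primrec
      ((codeRules_primrec.comp Primrec.snd).to₂)
  exact ntsOf_primrec.pair (hrules.pair (Primrec.const startLab))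


/-- There is no computable function which, given a code for
an FGG whose variable domains are `ℕ` and whose factors are the successor
and zero indicators, decides whether its sum–product is zero. -/
theorem statement3 :
    ¬ ∃ f : FGGCode → Bool, Computable f ∧
      ∀ (c : FGGCode) (h : WF c), (f c = true ↔ (interp c h).Z = 0) := by
  rintro ⟨f, hf, hcorr⟩
  apply ComputablePred.halting_problem 0
  rw [ComputablePred.computable_iff]
  refine ⟨fun e => !(f (gram e)), ?_, ?_⟩
  · exact (Primrec.not.to_comp).comp (hf.comp gram_primrec.to_comp)
  · funext e
    apply propext
    have hW := wf_gram e
    have hZ := InterpFacts.interp_Z_eq_zero_iff (gram e) hW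
    have hC := hcorr (gram e) hW
    have hS := csat_start_iff e
    constructor
    · intro hdom
      have hcs : CSat (gram e) (gram e).2.2 [] := hS.mpr hdom
      have : ¬ (interp (gram e) hW).Z = 0 := fun h0 => (hZ.mp h0) hcs
      have hff : ¬ f (gram e) = true := fun ht => this (hC.mp ht)
      simp [Bool.not_eq_true] at hff ⊢
      exact hff
    · intro hb
      simp at hb
      have hft : ¬ f (gram e) = true := by simp [hb]
      have hZne : ¬ (interp (gram e) hW).Z = 0 := fun h0 => hft (hC.mpr h0)
      have hcs : CSat (gram e) startLab [] := by
        by_contra hnc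
        exact hZne (hZ.mpr hnc)
      exact hS.mp hcs
end

section
/- Let G₁ and G₂ be FGGs. If G₂ is nonrecursive, then the conjunction G₁ ⊓ G₂ is nonrecursive. -/
open scoped ENNReal Classical

variable {LV LE : Type} {htype : LE → List LV}

variable {W : Type}

/-! ### Conjunction of FGGs -/

/-- Edge labels of the conjunction of two FGGs: tagged terminal labels from
either grammar, and pairs of nonterminal labels. -/
def CLab (LE : Type) : Type := (LE ⊕ LE) ⊕ LE × LE

/-- Types of the edge labels of a conjunction. -/
def chtype (htype : LE → List LV) : CLab LE → List LV := fun ℓ =>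
  match ℓ with
  | .inl (.inl t) => htype t
  | .inl (.inr t) => htype t
  | .inr p => htype p.1

/-- Two right-hand sides are conjoinable (with respect to nonterminal sets
`N₁`, `N₂`) if they share the same nodes, node labels, external nodes, and
nonterminal edges with the same attachments and with nonterminal labels of
equal types, differing only in their terminal edges. -/
structure Conjoinable (N₁ N₂ : Set LE) (R₁ R₂ : Fragment LV LE htype) : Prop where
  hV : R₁.V = R₂.V
  hlabV : ∀ v ∈ R₁.V, R₁.labV v = R₂.labV v
  hext : R₁.ext = R₂.ext
  hNT : ∀ e : ℕ, (e ∈ R₁.E ∧ R₁.labE e ∈ N₁) ↔ (e ∈ R₂.E ∧ R₂.labE e ∈ N₂)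
  hatt : ∀ e ∈ R₁.E, R₁.labE e ∈ N₁ → R₁.att e = R₂.att e
  htyp : ∀ e ∈ R₁.E, R₁.labE e ∈ N₁ → htype (R₂.labE e) = htype (R₁.labE e)

/-- The edge names of the conjunction of two conjoinable right-hand sides:
the shared nonterminal edges together with the disjoint union of the
terminal edges of both sides. -/
noncomputable def conjE (N₁ N₂ : Set LE) (R₁ R₂ : Fragment LV LE htype) :
    Finset ℕ :=
  ((R₁.E.filter fun e => R₁.labE e ∈ N₁).image fun e => 3 * e) ∪
  ((R₁.E.filter fun e => R₁.labE e ∉ N₁).image fun e => 3 * e + 1) ∪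
  ((R₂.E.filter fun e => R₂.labE e ∉ N₂).image fun e => 3 * e + 2)

theorem mem_conjE {N₁ N₂ : Set LE} {R₁ R₂ : Fragment LV LE htype} {e : ℕ}
    (he : e ∈ conjE N₁ N₂ R₁ R₂) :
    (∃ m, e = 3 * m ∧ m ∈ R₁.E ∧ R₁.labE m ∈ N₁) ∨
    (∃ m, e = 3 * m + 1 ∧ m ∈ R₁.E ∧ R₁.labE m ∉ N₁) ∨
    (∃ m, e = 3 * m + 2 ∧ m ∈ R₂.E ∧ R₂.labE m ∉ N₂) := by
  simp only [conjE, Finset.mem_union, Finset.mem_image, Finset.mem_filter] at he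
  rcases he with (⟨m, ⟨h1, h2⟩, rfl⟩ | ⟨m, ⟨h1, h2⟩, rfl⟩) | ⟨m, ⟨h1, h2⟩, rfl⟩
  · exact Or.inl ⟨m, rfl, h1, h2⟩
  · exact Or.inr (Or.inl ⟨m, rfl, h1, h2⟩)
  · exact Or.inr (Or.inr ⟨m, rfl, h1, h2⟩)

/-- The conjunction of two conjoinable right-hand sides. -/
noncomputable def conjFrag (N₁ N₂ : Set LE) (R₁ R₂ : Fragment LV LE htype)
    (hc : Conjoinable N₁ N₂ R₁ R₂) : Fragment LV (CLab LE) (chtype htype) where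
  V := R₁.V
  E := conjE N₁ N₂ R₁ R₂
  att e := if e % 3 = 0 then R₁.att (e / 3)
    else if e % 3 = 1 then R₁.att (e / 3) else R₂.att (e / 3)
  labV := R₁.labV
  labE e := if e % 3 = 0 then Sum.inr (R₁.labE (e / 3), R₂.labE (e / 3))
    else if e % 3 = 1 then Sum.inl (Sum.inl (R₁.labE (e / 3)))
    else Sum.inl (Sum.inr (R₂.labE (e / 3)))
  ext := R₁.ext
  att_mem := by
    intro e he v hv
    rcases mem_conjE he with ⟨m, rfl, h1, h2⟩ | ⟨m, rfl, h1, h2⟩ | ⟨m, rfl, h1, h2⟩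
    · have e0 : (3 * m) % 3 = 0 := by omega
      have e3 : (3 * m) / 3 = m := by omega
      simp only [e0, e3, if_pos] at hv
      exact R₁.att_mem m h1 v hv
    · have e0 : (3 * m + 1) % 3 = 1 := by omega
      have e3 : (3 * m + 1) / 3 = m := by omega
      simp only [e0, e3] at hv
      norm_num at hv
      exact R₁.att_mem m h1 v hv
    · have e0 : (3 * m + 2) % 3 = 2 := by omega
      have e3 : (3 * m + 2) / 3 = m := by omega
      simp only [e0, e3] at hv
      norm_num at hv
      rw [hc.hV]
      exact R₂.att_mem m h1 v hv
  wt := by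
    intro e he
    rcases mem_conjE he with ⟨m, rfl, h1, h2⟩ | ⟨m, rfl, h1, h2⟩ | ⟨m, rfl, h1, h2⟩
    · have e0 : (3 * m) % 3 = 0 := by omega
      have e3 : (3 * m) / 3 = m := by omega
      simp only [e0, e3, if_pos]
      exact R₁.wt m h1
    · have e0 : (3 * m + 1) % 3 = 1 := by omega
      have e3 : (3 * m + 1) / 3 = m := by omega
      simp only [e0, e3]
      norm_num
      exact R₁.wt m h1
    · have e0 : (3 * m + 2) % 3 = 2 := by omega
      have e3 : (3 * m + 2) / 3 = m := by omega
      simp only [e0, e3]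
      norm_num
      have : (R₂.att m).map R₁.labV = (R₂.att m).map R₂.labV := by
        refine List.map_congr_left (fun v hv => ?_)
        have hv2 : v ∈ R₂.V := R₂.att_mem m h1 v hv
        exact hc.hlabV v (by rw [hc.hV]; exact hv2)
      rw [this]
      exact R₂.wt m h1
  ext_mem := R₁.ext_mem

/-- The conjunction of two FGGs over the same labels and domains. -/
noncomputable def FGG.conj {W : Type} (G₁ G₂ : FGG LV LE htype W) :
    FGG LV (CLab LE) (chtype htype) W where
  N := Sum.inr '' (G₁.N ×ˢ G₂.N)
  T := (fun t => Sum.inl (Sum.inl t)) '' G₁.T ∪ (fun t => Sum.inl (Sum.inr t)) '' G₂.T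
  finN := ((G₁.finN.prod G₂.finN).image _)
  finT := (G₁.finT.image _).union (G₂.finT.image _)
  disj := by
    rw [Set.disjoint_left]
    rintro x ⟨p, _, rfl⟩ hx
    rcases hx with ⟨t, _, h⟩ | ⟨t, _, h⟩ <;> exact absurd h (by simp)
  P := {p : G₁.P × G₂.P //
    htype (G₁.lhs p.1) = htype (G₂.lhs p.2) ∧
    Conjoinable G₁.N G₂.N (G₁.rhs p.1) (G₂.rhs p.2)}
  finP := by
    haveI := G₁.finP
    haveI := G₂.finP
    infer_instance
  lhs p := Sum.inr (G₁.lhs p.1.1, G₂.lhs p.1.2)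
  lhs_mem p := ⟨(G₁.lhs p.1.1, G₂.lhs p.1.2),
    Set.mem_prod.2 ⟨G₁.lhs_mem _, G₂.lhs_mem _⟩, rfl⟩
  rhs p := conjFrag G₁.N G₂.N (G₁.rhs p.1.1) (G₂.rhs p.1.2) p.2.2
  rhs_lab := by
    intro p e he
    rcases mem_conjE he with ⟨m, rfl, h1, h2⟩ | ⟨m, rfl, h1, h2⟩ | ⟨m, rfl, h1, h2⟩
    · have e0 : (3 * m) % 3 = 0 := by omega
      have e3 : (3 * m) / 3 = m := by omega
      simp only [conjFrag, e0, e3, if_pos]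
      left
      refine ⟨((G₁.rhs p.1.1).labE m, (G₂.rhs p.1.2).labE m), Set.mem_prod.2 ⟨h2, ?_⟩, rfl⟩
      exact ((p.2.2.hNT m).1 ⟨h1, h2⟩).2
    · have e0 : (3 * m + 1) % 3 = 1 := by omega
      have e3 : (3 * m + 1) / 3 = m := by omega
      simp only [conjFrag, e0, e3]
      norm_num
      right; left
      refine ⟨(G₁.rhs p.1.1).labE m, ?_, rfl⟩
      rcases G₁.rhs_lab p.1.1 m h1 with h | h
      · exact absurd h h2
      · exact h
    · have e0 : (3 * m + 2) % 3 = 2 := by omega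
      have e3 : (3 * m + 2) / 3 = m := by omega
      simp only [conjFrag, e0, e3]
      norm_num
      right; right
      refine ⟨(G₂.rhs p.1.2).labE m, ?_, rfl⟩
      rcases G₂.rhs_lab p.1.2 m h1 with h | h
      · exact absurd h h2
      · exact h
  rhs_ext p := by
    simp only [conjFrag]
    exact G₁.rhs_ext p.1.1
  S := Sum.inr (G₁.S, G₂.S)
  S_mem := ⟨(G₁.S, G₂.S), Set.mem_prod.2 ⟨G₁.S_mem, G₂.S_mem⟩, rfl⟩
  S_type := G₁.S_type
  Ω := G₁.Ω
  F := fun ℓ l =>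
    match ℓ with
    | .inl (.inl t) => G₁.F t l
    | .inl (.inr t) => G₂.F t l
    | .inr _ => 0

/-- The (reflexive) subtree relation on derivation trees. -/
inductive Deriv.Subtree {G : HRG LV LE htype} :
    ∀ {X Y : LE}, Deriv G X → Deriv G Y → Prop
  | refl {X : LE} (D : Deriv G X) : Deriv.Subtree D D
  | step {X : LE} {D : Deriv G X} (π : G.P)
      (c : ∀ e, e ∈ (G.rhs π).E → (G.rhs π).labE e ∈ G.N →
        Deriv G ((G.rhs π).labE e))
      (e : ℕ) (he : e ∈ (G.rhs π).E) (hn : (G.rhs π).labE e ∈ G.N) :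
      Deriv.Subtree D (c e he hn) → Deriv.Subtree D (Deriv.node π c)

/-- The proper (strict) subtree relation on derivation trees. -/
inductive Deriv.StrictSubtree {G : HRG LV LE htype} :
    ∀ {X Y : LE}, Deriv G X → Deriv G Y → Prop
  | step {X : LE} {D : Deriv G X} (π : G.P)
      (c : ∀ e, e ∈ (G.rhs π).E → (G.rhs π).labE e ∈ G.N →
        Deriv G ((G.rhs π).labE e))
      (e : ℕ) (he : e ∈ (G.rhs π).E) (hn : (G.rhs π).labE e ∈ G.N) :
      Deriv.Subtree D (c e he hn) → Deriv.StrictSubtree D (Deriv.node π c)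

/-- An HRG is recursive if some `X`-type derivation tree contains a proper
subtree that is also an `X`-type derivation tree. -/
def HRG.Recursive (G : HRG LV LE htype) : Prop :=
  ∃ (X : LE) (D D' : Deriv G X), Deriv.StrictSubtree D D'

/-! Forgetting the first component of every conjoined rule turns a derivation tree of `G₁ ⊓ G₂`
of type `⟨X₁, X₂⟩` into a derivation tree of `G₂` of type `X₂`, and it maps proper subtrees to
proper subtrees. Hence a recursion `D ⊏ D'` in `G₁ ⊓ G₂` projects to a recursion in `G₂`. -/

section Conjunction

variable {N₁ N₂ : Set LE} {R₁ R₂ : Fragment LV LE htype}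

theorem conjFrag_labE_three_mul (hc : Conjoinable N₁ N₂ R₁ R₂) (m : ℕ) :
    (conjFrag N₁ N₂ R₁ R₂ hc).labE (3 * m) = Sum.inr (R₁.labE m, R₂.labE m) := by
  simp [conjFrag]
  rfl

theorem three_mul_mem_conjE {m : ℕ} (h1 : m ∈ R₁.E) (h2 : R₁.labE m ∈ N₁) :
    3 * m ∈ conjE N₁ N₂ R₁ R₂ := by
  simp only [conjE, Finset.mem_union, Finset.mem_image, Finset.mem_filter]
  exact Or.inl (Or.inl ⟨m, ⟨h1, h2⟩, rfl⟩)

theorem exists_eq_three_mul_of_mem_conjE (hc : Conjoinable N₁ N₂ R₁ R₂) {e : ℕ}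
    (he : e ∈ conjE N₁ N₂ R₁ R₂)
    (hn : (conjFrag N₁ N₂ R₁ R₂ hc).labE e ∈ Sum.inr '' (N₁ ×ˢ N₂)) :
    ∃ m, e = 3 * m ∧ m ∈ R₂.E ∧ R₂.labE m ∈ N₂ := by
  rcases mem_conjE he with ⟨m, rfl, h1, h2⟩ | ⟨m, rfl, -, -⟩ | ⟨m, rfl, -, -⟩
  · exact ⟨m, rfl, (hc.hNT m).1 ⟨h1, h2⟩⟩
  all_goals
    obtain ⟨_, -, hp⟩ := hn
    simp [conjFrag] at hp

end Conjunction

def CLab.snd : CLab LE → LE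
  | .inl (.inl t) => t
  | .inl (.inr t) => t
  | .inr p => p.2

def Deriv.castLab {G : HRG LV LE htype} {X Y : LE} (h : X = Y) (D : Deriv G X) :
    Deriv G Y :=
  h ▸ D

theorem Deriv.Subtree.castLab {G : HRG LV LE htype} {X Y Z : LE}
    {D : Deriv G X} {D' : Deriv G Y} (h : Y = Z) (hs : D.Subtree D') :
    D.Subtree (D'.castLab h) := by
  subst h
  exact hs

theorem Deriv.StrictSubtree.subtree {G : HRG LV LE htype} {X Y : LE}
    {D : Deriv G X} {D' : Deriv G Y} (h : D.StrictSubtree D') : D.Subtree D' := by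
  obtain ⟨π, c, e, he, hn, hs⟩ := h
  exact .step π c e he hn hs

namespace FGG

variable (G₁ G₂ : FGG LV LE htype W)

/-- A conjoined rule `⟨π₁, π₂⟩` becomes `π₂`; the nonterminal edge `m` of `π₂` is the edge
`3 * m` of the conjoined rule. -/
noncomputable def projDeriv : ∀ {X : CLab LE}, Deriv (G₁.conj G₂).toHRG X →
    Deriv G₂.toHRG X.snd
  | _, .node π c =>
      .node π.1.2 fun m hm hmN =>
        have hm₁ := (π.2.2.hNT m).2 ⟨hm, hmN⟩
        have hlab : ((G₁.conj G₂).rhs π).labE (3 * m) = .inr (_, _) :=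
          conjFrag_labE_three_mul π.2.2 m
        (projDeriv (c (3 * m) (three_mul_mem_conjE hm₁.1 hm₁.2)
            (by rw [hlab]; exact ⟨_, ⟨hm₁.2, hmN⟩, rfl⟩))).castLab
          (by rw [hlab]; rfl)

variable {G₁ G₂}

theorem projDeriv_strictSubtree_node {π : (G₁.conj G₂).P}
    {c : ∀ e, e ∈ ((G₁.conj G₂).rhs π).E → ((G₁.conj G₂).rhs π).labE e ∈ (G₁.conj G₂).N →
      Deriv (G₁.conj G₂).toHRG (((G₁.conj G₂).rhs π).labE e)}
    {e : ℕ} {he : e ∈ ((G₁.conj G₂).rhs π).E}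
    {hn : ((G₁.conj G₂).rhs π).labE e ∈ (G₁.conj G₂).N}
    {Y : LE} {D : Deriv G₂.toHRG Y} (h : D.Subtree (projDeriv G₁ G₂ (c e he hn))) :
    D.StrictSubtree (projDeriv G₁ G₂ (.node π c)) := by
  obtain ⟨m, rfl, hm, hmN⟩ := exists_eq_three_mul_of_mem_conjE π.2.2 he hn
  exact .step π.1.2 _ m hm hmN (h.castLab _)

theorem projDeriv_subtree {X Y : CLab LE}
    {D : Deriv (G₁.conj G₂).toHRG X} {D' : Deriv (G₁.conj G₂).toHRG Y}
    (h : D.Subtree D') : (projDeriv G₁ G₂ D).Subtree (projDeriv G₁ G₂ D') := by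
  induction h with
  | refl => exact .refl _
  | step _ _ _ _ _ _ ih => exact (projDeriv_strictSubtree_node ih).subtree

theorem projDeriv_strictSubtree {X Y : CLab LE}
    {D : Deriv (G₁.conj G₂).toHRG X} {D' : Deriv (G₁.conj G₂).toHRG Y}
    (h : D.StrictSubtree D') : (projDeriv G₁ G₂ D).StrictSubtree (projDeriv G₁ G₂ D') := by
  obtain ⟨_, _, _, _, _, hs⟩ := h
  exact projDeriv_strictSubtree_node (projDeriv_subtree hs)

end FGG

/-- If `G₂` is nonrecursive, then the conjunction
`G₁ ⊓ G₂` is nonrecursive. -/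
theorem statement13 {LV LE W : Type} {htype : LE → List LV}
    (G₁ G₂ : FGG LV LE htype W) (h : ¬ G₂.Recursive) :
    ¬ (G₁.conj G₂).Recursive := by
  rintro ⟨X, D, D', hs⟩
  exact h ⟨X.snd, _, _, FGG.projDeriv_strictSubtree hs⟩
end
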